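/- arXiv:math/0412171 — 5 statements merged into one kernel-verified Lean document; each statement's English description precedes it below -/
import Mathlib

section
/- If (e_n) is a seminormalized quasisubsymmetric weakly null basic sequence in a Banach space, then there exists a subsequence (e_{k_n}) of (e_n) which is an unconditional basic sequence. -/
open Filter Topology

section Defs

variable {X : Type*} [NormedAddCommGroup X] [NormedSpace ℝ X]

/-- A sequence `(e n)` in a normed space is *seminormalized* if
`0 < inf_n ‖e n‖` and `sup_n ‖e n‖ < ∞`. -/
def Seminormalized (e : ℕ → X) : Prop :=
  ∃ d D : ℝ, 0 < d ∧ ∀ n, d ≤ ‖e n‖ ∧ ‖e n‖ ≤ D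

/-- `(e n)` is a *basic sequence*: each `e n` is nonzero and there is a basis
constant `B ≥ 1` such that `‖∑_{n<m} a n • e n‖ ≤ B * ‖∑_{n<M} a n • e n‖`
for all `m ≤ M` and all scalars. -/
def IsBasicSeq (e : ℕ → X) : Prop :=
  (∀ n, e n ≠ 0) ∧ ∃ B : ℝ, 1 ≤ B ∧ ∀ (a : ℕ → ℝ) (m M : ℕ), m ≤ M →
    ‖∑ n ∈ Finset.range m, a n • e n‖ ≤ B * ‖∑ n ∈ Finset.range M, a n • e n‖

/-- `(x n)` *dominates* `(y n)`: there is `C > 0` with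
`‖∑ a n • y n‖ ≤ C * ‖∑ a n • x n‖` for all finitely supported scalars. -/
def Dominates (x y : ℕ → X) : Prop :=
  ∃ C : ℝ, 0 < C ∧ ∀ (a : ℕ → ℝ) (F : Finset ℕ),
    ‖∑ n ∈ F, a n • y n‖ ≤ C * ‖∑ n ∈ F, a n • x n‖

/-- `(e n)` is *quasisubsymmetric*: for any two strictly increasing sequences
`k`, `l` of indices with `k n ≤ l n` for all `n`, `(e (k n))` dominates `(e (l n))`. -/
def QuasiSubsymmetric (e : ℕ → X) : Prop :=
  ∀ k l : ℕ → ℕ, StrictMono k → StrictMono l → (∀ n, k n ≤ l n) →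
    Dominates (fun n => e (k n)) (fun n => e (l n))

/-- `(e n)` is an *unconditional basic sequence*. -/
def IsUncondBasicSeq (e : ℕ → X) : Prop :=
  IsBasicSeq e ∧ ∃ K : ℝ, ∀ (a ε : ℕ → ℝ), (∀ n, ε n = 1 ∨ ε n = -1) →
    ∀ F : Finset ℕ, ‖∑ n ∈ F, (ε n * a n) • e n‖ ≤ K * ‖∑ n ∈ F, a n • e n‖

/-- `(e n)` is a *Schauder basis* of `X`: every `x ∈ X` has a unique
representation `x = ∑ n, a n • e n` (convergence of partial sums in order). -/
def IsSchauderBasis (e : ℕ → X) : Prop :=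
  ∀ x : X, ∃! a : ℕ → ℝ,
    Tendsto (fun M => ∑ n ∈ Finset.range M, a n • e n) atTop (𝓝 x)

/-- `(e n)` is equivalent to the unit vector basis of `ℓ¹`. -/
def EquivL1Basis (e : ℕ → X) : Prop :=
  ∃ c C : ℝ, 0 < c ∧ ∀ (a : ℕ → ℝ) (F : Finset ℕ),
    c * ∑ n ∈ F, |a n| ≤ ‖∑ n ∈ F, a n • e n‖ ∧
      ‖∑ n ∈ F, a n • e n‖ ≤ C * ∑ n ∈ F, |a n|

end Defs

section Aux


variable {X : Type*} [NormedAddCommGroup X] [NormedSpace ℝ X]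

/-- Convex combination bound. -/
lemma qss_conv_bound (S : Finset ℕ) (c : ℕ → ℝ) (hc : ∀ j ∈ S, 0 ≤ c j)
    (hsum : ∑ j ∈ S, c j = 1) (e : ℕ → X) (u : X) (b : ℝ) (M : ℝ)
    (h : ∀ j ∈ S, ‖u + b • e j‖ ≤ M) :
    ‖u + b • ∑ j ∈ S, c j • e j‖ ≤ M := by
  have key : u + b • ∑ j ∈ S, c j • e j = ∑ j ∈ S, c j • (u + b • e j) := by
    simp only [smul_add, Finset.sum_add_distrib, ← Finset.sum_smul, hsum, one_smul,
      smul_comm _ b, Finset.smul_sum]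
  rw [key]
  calc ‖∑ j ∈ S, c j • (u + b • e j)‖ ≤ ∑ j ∈ S, ‖c j • (u + b • e j)‖ := norm_sum_le _ _
    _ ≤ ∑ j ∈ S, c j * M := by
        refine Finset.sum_le_sum fun j hj => ?_
        rw [norm_smul, Real.norm_of_nonneg (hc j hj)]
        exact mul_le_mul_of_nonneg_left (h j hj) (hc j hj)
    _ = M := by rw [← Finset.sum_mul, hsum, one_mul]

/-- A subsequence of a basic sequence satisfies the same basis inequality. -/
lemma qss_sub_basic (e : ℕ → X) (B : ℝ)
    (hB : ∀ (a : ℕ → ℝ) (m M : ℕ), m ≤ M →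
      ‖∑ n ∈ Finset.range m, a n • e n‖ ≤ B * ‖∑ n ∈ Finset.range M, a n • e n‖)
    (k : ℕ → ℕ) (hk : StrictMono k) :
    ∀ (a : ℕ → ℝ) (m M : ℕ), m ≤ M →
      ‖∑ n ∈ Finset.range m, a n • e (k n)‖ ≤ B * ‖∑ n ∈ Finset.range M, a n • e (k n)‖ := by
  classical
  intro a m M hmM
  set b : ℕ → ℝ := fun j => if h : ∃ n, n < M ∧ k n = j then a h.choose else 0 with hbdef
  have hbk : ∀ n, n < M → b (k n) = a n := by
    intro n hn
    have h : ∃ n', n' < M ∧ k n' = k n := ⟨n, hn, rfl⟩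
    simp only [hbdef, dif_pos h]
    rw [hk.injective h.choose_spec.2]
  have key : ∀ m', m' ≤ M → ∑ j ∈ Finset.range (k m'), b j • e j
      = ∑ n ∈ Finset.range m', a n • e (k n) := by
    intro m' hm'
    have h1 : ∑ n ∈ Finset.range m', a n • e (k n)
        = ∑ n ∈ Finset.range m', b (k n) • e (k n) :=
      Finset.sum_congr rfl fun n hn => by
        rw [hbk n (lt_of_lt_of_le (Finset.mem_range.1 hn) hm')]
    have h2 : ∑ n ∈ Finset.range m', b (k n) • e (k n)
        = ∑ j ∈ (Finset.range m').image k, b j • e j :=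
      (Finset.sum_image (f := fun j => b j • e j) fun x _ y _ h => hk.injective h).symm
    have h3 : (Finset.range m').image k ⊆ Finset.range (k m') := by
      intro j hj
      obtain ⟨n, hn, rfl⟩ := Finset.mem_image.1 hj
      exact Finset.mem_range.2 (hk (Finset.mem_range.1 hn))
    rw [h1, h2]
    refine (Finset.sum_subset h3 fun j hj hnj => ?_).symm
    by_contra hne
    have hbj : b j ≠ 0 := fun h0 => hne (by rw [h0, zero_smul])
    have hex : ∃ n, n < M ∧ k n = j := by
      by_contra hno
      exact hbj (by simp only [hbdef, dif_neg hno])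
    obtain ⟨hlt, heq⟩ := hex.choose_spec
    refine hnj (Finset.mem_image.2 ⟨hex.choose, Finset.mem_range.2 ?_, heq⟩)
    have : k hex.choose < k m' := by rw [heq]; exact Finset.mem_range.1 hj
    exact hk.lt_iff_lt.1 this
  rw [← key m hmM, ← key M le_rfl]
  exact hB b (k m) (k M) (hk.monotone hmM)

/-- Coefficient functional bound for a basic sequence. -/
lemma qss_coeff_bound (y : ℕ → X) (B d : ℝ) (hd : 0 < d) (hdy : ∀ n, d ≤ ‖y n‖)
    (hB : ∀ (a : ℕ → ℝ) (m M : ℕ), m ≤ M →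
      ‖∑ n ∈ Finset.range m, a n • y n‖ ≤ B * ‖∑ n ∈ Finset.range M, a n • y n‖)
    (a : ℕ → ℝ) (F : Finset ℕ) (i : ℕ) (hi : i ∈ F) :
    |a i| ≤ (2 * B / d) * ‖∑ n ∈ F, a n • y n‖ := by
  classical
  set a' : ℕ → ℝ := fun n => if n ∈ F then a n else 0 with ha'def
  set M := F.sup id + 1 with hMdef
  have hFM : F ⊆ Finset.range M := fun j hj =>
    Finset.mem_range.2 (Nat.lt_succ_of_le (Finset.le_sup (f := id) hj))
  have hx : ∑ n ∈ Finset.range M, a' n • y n = ∑ n ∈ F, a n • y n := by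
    rw [← Finset.sum_subset hFM (fun n _ hn => by simp [ha'def, hn])]
    exact Finset.sum_congr rfl fun n hn => by simp [ha'def, hn]
  set x := ∑ n ∈ F, a n • y n with hxdef
  have hiM : i + 1 ≤ M := Nat.succ_le_succ (Finset.le_sup (f := id) hi)
  have h1 : ‖∑ n ∈ Finset.range (i + 1), a' n • y n‖ ≤ B * ‖x‖ := by
    rw [← hx]; exact hB a' (i + 1) M hiM
  have h2 : ‖∑ n ∈ Finset.range i, a' n • y n‖ ≤ B * ‖x‖ := by
    rw [← hx]; exact hB a' i M (le_trans (Nat.le_succ i) hiM)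
  have hdiff : a' i • y i = ∑ n ∈ Finset.range (i + 1), a' n • y n
      - ∑ n ∈ Finset.range i, a' n • y n := by
    rw [Finset.sum_range_succ]; abel
  have hbound : ‖a' i • y i‖ ≤ 2 * B * ‖x‖ := by
    rw [hdiff]
    calc ‖_ - _‖ ≤ ‖∑ n ∈ Finset.range (i + 1), a' n • y n‖
        + ‖∑ n ∈ Finset.range i, a' n • y n‖ := norm_sub_le _ _
      _ ≤ B * ‖x‖ + B * ‖x‖ := add_le_add h1 h2
      _ = 2 * B * ‖x‖ := by ring
  have ha'i : a' i = a i := by simp [ha'def, hi]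
  rw [ha'i, norm_smul, Real.norm_eq_abs] at hbound
  have hda : |a i| * d ≤ 2 * B * ‖x‖ :=
    le_trans (mul_le_mul_of_nonneg_left (hdy i) (abs_nonneg _)) hbound
  have : |a i| ≤ 2 * B * ‖x‖ / d := (le_div_iff₀ hd).mpr hda
  calc |a i| ≤ 2 * B * ‖x‖ / d := this
    _ = 2 * B / d * ‖x‖ := by ring


lemma qss_mazur (e : ℕ → X)
    (hwnull : ∀ f : X →L[ℝ] ℝ, Tendsto (fun n => f (e n)) atTop (𝓝 0))
    (m : ℕ) (ε : ℝ) (hε : 0 < ε) :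
    ∃ S : Finset ℕ, ∃ c : ℕ → ℝ, (∀ j ∈ S, m < j) ∧ (∀ j ∈ S, 0 ≤ c j) ∧
      ∑ j ∈ S, c j = 1 ∧ ‖∑ j ∈ S, c j • e j‖ ≤ ε := by
  classical
  set A := closure (convexHull ℝ (e '' {j | m < j})) with hAdef
  have h0 : (0 : X) ∈ A := by
    by_contra h0
    obtain ⟨f, u, hfu, hA⟩ := geometric_hahn_banach_point_closed
      ((convex_convexHull ℝ _).closure) isClosed_closure h0
    have hu : (0 : ℝ) < u := by simpa using hfu
    have hev : ∀ᶠ n in atTop, f (e n) < u :=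
      (hwnull f).eventually (Filter.Tendsto.eventually_lt_const hu tendsto_id) |>.mono fun n h => h
    obtain ⟨n, hn1, hn2⟩ := (hev.and (eventually_gt_atTop m)).exists
    have hmem : e n ∈ A := subset_closure (subset_convexHull ℝ _ ⟨n, hn2, rfl⟩)
    exact absurd (hA _ hmem) (not_lt.2 hn1.le)
  obtain ⟨y, hy_mem, hy_dist⟩ := Metric.mem_closure_iff.1 h0 ε hε
  rw [convexHull_eq] at hy_mem
  obtain ⟨ι, t, w, z, hw0, hw1, hz, hy⟩ := hy_mem
  have hch : ∀ i ∈ t, ∃ j, m < j ∧ e j = z i := by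
    intro i hi; obtain ⟨j, hj, hje⟩ := hz i hi; exact ⟨j, hj, hje⟩
  choose! jf hj1 hj2 using hch
  refine ⟨t.image jf, fun j0 => ∑ i ∈ t.filter (fun i => jf i = j0), w i, ?_, ?_, ?_, ?_⟩
  · intro j0 hj0
    obtain ⟨i, hi, rfl⟩ := Finset.mem_image.1 hj0
    exact hj1 i hi
  · intro j0 _
    exact Finset.sum_nonneg fun i hi => hw0 i (Finset.mem_filter.1 hi).1
  · rw [Finset.sum_fiberwise_of_maps_to (fun i hi => Finset.mem_image_of_mem jf hi)]
    exact hw1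
  · have hyeq : ∑ j0 ∈ t.image jf, (∑ i ∈ t.filter (fun i => jf i = j0), w i) • e j0 = y := by
      rw [← hy, Finset.centerMass_eq_of_sum_1 _ _ hw1]
      rw [← Finset.sum_fiberwise_of_maps_to (fun i hi => Finset.mem_image_of_mem jf hi)
        (fun i => w i • z i)]
      refine Finset.sum_congr rfl fun j0 hj0 => ?_
      rw [Finset.sum_smul]
      refine Finset.sum_congr rfl fun i hi => ?_
      obtain ⟨hit, hij⟩ := Finset.mem_filter.1 hi
      rw [← hij, hj2 i hit]
    rw [hyeq]
    have : dist (0 : X) y = ‖y‖ := by simp [dist_eq_norm]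
    linarith [hy_dist, this.symm.le]

end Aux

/-- **Corollary 2.8.** A seminormalized quasisubsymmetric weakly null basic sequence
has an unconditional subsequence. -/

theorem weakly_null_has_unconditional_subsequence
    {X : Type*} [NormedAddCommGroup X] [NormedSpace ℝ X] [CompleteSpace X]
    (e : ℕ → X) (hbasic : IsBasicSeq e) (hsemi : Seminormalized e)
    (hqss : QuasiSubsymmetric e)
    (hwnull : ∀ f : X →L[ℝ] ℝ, Tendsto (fun n => f (e n)) atTop (𝓝 0)) :
    ∃ k : ℕ → ℕ, StrictMono k ∧ IsUncondBasicSeq (fun n => e (k n)) := by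
  classical
  obtain ⟨hne, B, hB1, hB⟩ := hbasic
  obtain ⟨d, D, hd, hdD⟩ := hsemi
  have hdn : ∀ n, d ≤ ‖e n‖ := fun n => (hdD n).1
  have hDn : ∀ n, ‖e n‖ ≤ D := fun n => (hdD n).2
  have hD0 : (0 : ℝ) < D := lt_of_lt_of_le hd (le_trans (hdn 0) (hDn 0))
  have hB0 : (0 : ℝ) < B := lt_of_lt_of_le one_pos hB1
  -- Mazur: small convex combinations of far-out vectors
  have mz : ∀ m i : ℕ, ∃ S : Finset ℕ, ∃ c : ℕ → ℝ, (∀ j ∈ S, m < j) ∧ (∀ j ∈ S, 0 ≤ c j) ∧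
      ∑ j ∈ S, c j = 1 ∧ ‖∑ j ∈ S, c j • e j‖ ≤ (2 : ℝ)⁻¹ ^ i :=
    fun m i => qss_mazur e hwnull m ((2 : ℝ)⁻¹ ^ i) (by positivity)
  choose Sf cf hS1 hS2 hS3 hS4 using mz
  -- the subsequence
  set k : ℕ → ℕ := fun n => Nat.rec 0 (fun n kn => (Sf kn n).sup id + 1) n with hkdef
  have hksucc : ∀ n, k (n + 1) = (Sf (k n) n).sup id + 1 := fun n => rfl
  set S : ℕ → Finset ℕ := fun i => Sf (k i) i with hSdef
  set c : ℕ → ℕ → ℝ := fun i => cf (k i) i with hcdef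
  set w : ℕ → X := fun i => ∑ j ∈ S i, c i j • e j with hwdef
  have hSne : ∀ i, (S i).Nonempty := by
    intro i
    rw [Finset.nonempty_iff_ne_empty]
    intro hemp
    have h3 := hS3 (k i) i
    rw [show Sf (k i) i = S i from rfl, hemp, Finset.sum_empty] at h3
    norm_num at h3
  have hSlow : ∀ i, ∀ j ∈ S i, k i < j := fun i => hS1 (k i) i
  have hShigh : ∀ i, ∀ j ∈ S i, j < k (i + 1) := fun i j hj => by
    rw [hksucc]
    exact Nat.lt_succ_of_le (Finset.le_sup (f := id) hj)
  have hkmono : StrictMono k := by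
    refine strictMono_nat_of_lt_succ fun n => ?_
    obtain ⟨j, hj⟩ := hSne n
    exact lt_trans (hSlow n j hj) (hShigh n j hj)
  have hwnorm : ∀ i, ‖w i‖ ≤ (2 : ℝ)⁻¹ ^ i := fun i => hS4 (k i) i
  -- the subsequence is basic with the same constant
  have hBk := qss_sub_basic e B hB k hkmono
  have coeff : ∀ (a : ℕ → ℝ) (F : Finset ℕ), ∀ i ∈ F,
      |a i| ≤ (2 * B / d) * ‖∑ n ∈ F, a n • e (k n)‖ :=
    fun a F i hi => qss_coeff_bound (fun n => e (k n)) B d hd (fun n => hdn (k n)) hBk a F i hi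
  -- gap patterns
  set Gap : (ℕ → ℕ) → Prop := fun l => ∀ i, k i ≤ l i ∧ l i < k (i + 1) with hGdef
  have gapMono : ∀ l, Gap l → StrictMono l := fun l hl =>
    strictMono_nat_of_lt_succ fun n => lt_of_lt_of_le (hl n).2 (hl (n + 1)).1
  -- uniform domination over all gap patterns
  have uniform : ∃ C : ℝ, 0 < C ∧ ∀ l, Gap l → ∀ (a : ℕ → ℝ) (F : Finset ℕ),
      ‖∑ i ∈ F, a i • e (l i)‖ ≤ C * ‖∑ i ∈ F, a i • e (k i)‖ := by
    by_contra hcon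
    push_neg at hcon
    have tail : ∀ (m : ℕ) (T : ℝ), 0 < T → ∃ l : ℕ → ℕ, ∃ a : ℕ → ℝ, ∃ F : Finset ℕ, Gap l ∧ (∀ i ∈ F, m ≤ i) ∧
        T * ‖∑ i ∈ F, a i • e (k i)‖ < ‖∑ i ∈ F, a i • e (l i)‖ := by
      intro m T hT
      by_contra htail
      push_neg at htail
      set C0 : ℝ := (m : ℝ) * (2 * B * D / d) + T * (1 + (m : ℝ) * (2 * B * D / d)) with hC0
      have hmBD : (0 : ℝ) ≤ (m : ℝ) * (2 * B * D / d) := by positivity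
      have hC0pos : 0 < C0 := by
        have h2 : 0 < T * (1 + (m : ℝ) * (2 * B * D / d)) := mul_pos hT (by linarith)
        rw [hC0]; linarith
      obtain ⟨l, hl, a, F, hgt⟩ := hcon C0 hC0pos
      refine absurd hgt (not_lt.2 ?_)
      -- show the uniform bound with constant C0
      set x := ∑ i ∈ F, a i • e (k i) with hxdef
      set F1 := F.filter (fun i => i < m) with hF1
      set F2 := F.filter (fun i => ¬ i < m) with hF2
      have head : ∀ g : ℕ → ℕ, ‖∑ i ∈ F1, a i • e (g i)‖ ≤ (m : ℝ) * (2 * B * D / d) * ‖x‖ := by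
        intro g
        have hcard : (F1.card : ℝ) ≤ (m : ℝ) := by
          have : F1 ⊆ Finset.range m := fun i hi => Finset.mem_range.2 (Finset.mem_filter.1 hi).2
          exact_mod_cast le_trans (Finset.card_le_card this) (le_of_eq (Finset.card_range m))
        calc ‖∑ i ∈ F1, a i • e (g i)‖ ≤ ∑ i ∈ F1, ‖a i • e (g i)‖ := norm_sum_le _ _
          _ ≤ ∑ i ∈ F1, (2 * B / d * ‖x‖) * D := by
              refine Finset.sum_le_sum fun i hi => ?_
              rw [norm_smul, Real.norm_eq_abs]
              exact mul_le_mul (coeff a F i (Finset.filter_subset _ _ hi)) (hDn (g i))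
                (norm_nonneg _) (by positivity)
          _ = (F1.card : ℝ) * ((2 * B / d * ‖x‖) * D) := by
              rw [Finset.sum_const, nsmul_eq_mul]
          _ ≤ (m : ℝ) * ((2 * B / d * ‖x‖) * D) :=
              mul_le_mul_of_nonneg_right hcard (by positivity)
          _ = (m : ℝ) * (2 * B * D / d) * ‖x‖ := by ring
      have hsplitl : ∑ i ∈ F, a i • e (l i)
          = ∑ i ∈ F1, a i • e (l i) + ∑ i ∈ F2, a i • e (l i) :=
        (Finset.sum_filter_add_sum_filter_not F _ _).symm
      have hsplitk : x = ∑ i ∈ F1, a i • e (k i) + ∑ i ∈ F2, a i • e (k i) :=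
        (Finset.sum_filter_add_sum_filter_not F _ _).symm
      have htail2 : ‖∑ i ∈ F2, a i • e (l i)‖ ≤ T * ‖∑ i ∈ F2, a i • e (k i)‖ :=
        htail l a F2 hl (fun i hi => not_lt.1 (Finset.mem_filter.1 hi).2)
      have hF2k : ‖∑ i ∈ F2, a i • e (k i)‖ ≤ ‖x‖ + (m : ℝ) * (2 * B * D / d) * ‖x‖ := by
        have : ∑ i ∈ F2, a i • e (k i) = x - ∑ i ∈ F1, a i • e (k i) := by
          rw [hsplitk]; abel
        rw [this]
        exact le_trans (norm_sub_le _ _) (add_le_add le_rfl (head k))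
      calc ‖∑ i ∈ F, a i • e (l i)‖
          ≤ ‖∑ i ∈ F1, a i • e (l i)‖ + ‖∑ i ∈ F2, a i • e (l i)‖ := by
            rw [hsplitl]; exact norm_add_le _ _
        _ ≤ (m : ℝ) * (2 * B * D / d) * ‖x‖
            + T * (‖x‖ + (m : ℝ) * (2 * B * D / d) * ‖x‖) := by
            refine add_le_add (head l) (le_trans htail2 ?_)
            exact mul_le_mul_of_nonneg_left hF2k (le_of_lt hT)
        _ = C0 * ‖x‖ := by rw [hC0]; ring
    -- now glue badly behaved patterns into a single gap pattern
    have pick : ∀ m j : ℕ, ∃ l : ℕ → ℕ, ∃ a : ℕ → ℝ, ∃ F : Finset ℕ, Gap l ∧ (∀ i ∈ F, m ≤ i) ∧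
        ((j : ℝ) + 1) * ‖∑ i ∈ F, a i • e (k i)‖ < ‖∑ i ∈ F, a i • e (l i)‖ :=
      fun m j => tail m ((j : ℝ) + 1) (by positivity)
    choose lch ach Fch hg hmF hlt using pick
    set Mf : ℕ → ℕ := fun j => Nat.rec 0 (fun j Mj => (Fch Mj j).sup id + 1) j with hMfdef
    have hMfsucc : ∀ j, Mf (j + 1) = (Fch (Mf j) j).sup id + 1 := fun j => rfl
    have hFne : ∀ j, (Fch (Mf j) j).Nonempty := by
      intro j
      rw [Finset.nonempty_iff_ne_empty]
      intro hemp
      have h := hlt (Mf j) j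
      rw [hemp] at h
      simp only [Finset.sum_empty, norm_zero, mul_zero] at h
      exact lt_irrefl _ h
    have hFub : ∀ j, ∀ i ∈ Fch (Mf j) j, i < Mf (j + 1) := fun j i hi => by
      rw [hMfsucc]
      exact Nat.lt_succ_of_le (Finset.le_sup (f := id) hi)
    have hFlb : ∀ j, ∀ i ∈ Fch (Mf j) j, Mf j ≤ i := fun j => hmF (Mf j) j
    have hMfmono : Monotone Mf := by
      refine monotone_nat_of_le_succ fun j => ?_
      obtain ⟨i, hi⟩ := hFne j
      exact le_trans (hFlb j i hi) (le_of_lt (hFub j i hi))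
    have hdisj : ∀ j1 j2 i, i ∈ Fch (Mf j1) j1 → i ∈ Fch (Mf j2) j2 → j1 = j2 := by
      intro j1 j2 i h1 h2
      by_contra hne'
      rcases lt_or_gt_of_ne hne' with h | h
      · exact absurd (hFlb j2 i h2)
          (not_le.2 (lt_of_lt_of_le (hFub j1 i h1) (hMfmono (Nat.succ_le_of_lt h))))
      · exact absurd (hFlb j1 i h1)
          (not_le.2 (lt_of_lt_of_le (hFub j2 i h2) (hMfmono (Nat.succ_le_of_lt h))))
    set L : ℕ → ℕ := fun i => if h : ∃ j, i ∈ Fch (Mf j) j then lch (Mf h.choose) h.choose i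
      else k i with hLdef
    have hLgap : Gap L := by
      intro i
      by_cases h : ∃ j, i ∈ Fch (Mf j) j
      · simp only [hLdef, dif_pos h]
        exact hg (Mf h.choose) h.choose i
      · simp only [hLdef, dif_neg h]
        exact ⟨le_rfl, hkmono (Nat.lt_succ_self i)⟩
    obtain ⟨CL, hCL, hdom⟩ := hqss k L hkmono (gapMono L hLgap) (fun i => (hLgap i).1)
    set j0 := ⌈CL⌉₊ with hj0
    have hCLle : CL ≤ (j0 : ℝ) + 1 := le_trans (Nat.le_ceil CL) (by rw [hj0]; norm_num)
    have hLeq : ∀ i ∈ Fch (Mf j0) j0, L i = lch (Mf j0) j0 i := by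
      intro i hi
      have h : ∃ j, i ∈ Fch (Mf j) j := ⟨j0, hi⟩
      simp only [hLdef, dif_pos h]
      rw [hdisj h.choose j0 i h.choose_spec hi]
    have hd0 := hdom (ach (Mf j0) j0) (Fch (Mf j0) j0)
    simp only [] at hd0
    have heq : ∑ i ∈ Fch (Mf j0) j0, ach (Mf j0) j0 i • e (L i)
        = ∑ i ∈ Fch (Mf j0) j0, ach (Mf j0) j0 i • e (lch (Mf j0) j0 i) :=
      Finset.sum_congr rfl fun i hi => by rw [hLeq i hi]
    rw [heq] at hd0
    have hlt0 := hlt (Mf j0) j0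
    have hchain : ‖∑ i ∈ Fch (Mf j0) j0, ach (Mf j0) j0 i • e (lch (Mf j0) j0 i)‖
        ≤ ((j0 : ℝ) + 1) * ‖∑ i ∈ Fch (Mf j0) j0, ach (Mf j0) j0 i • e (k i)‖ :=
      le_trans hd0 (mul_le_mul_of_nonneg_right hCLle (norm_nonneg _))
    exact absurd hchain (not_le.2 hlt0)
  obtain ⟨C, hCpos, hC⟩ := uniform
  -- suppression of coefficients
  have supp : ∀ (a : ℕ → ℝ) (F G : Finset ℕ), G ⊆ F →
      ‖∑ i ∈ G, a i • e (k i)‖ ≤ (C + 4 * B / d) * ‖∑ i ∈ F, a i • e (k i)‖ := by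
    intro a F G hGF
    set x := ∑ i ∈ F, a i • e (k i) with hxdef
    set Ds := F \ G with hDsdef
    have hDsF : Ds ⊆ F := Finset.sdiff_subset
    have claim : ∀ D' : Finset ℕ, D' ⊆ Ds → ∀ σ : ℕ → ℕ, (∀ i ∈ Ds \ D', σ i ∈ S i) →
        ‖(∑ i ∈ G, a i • e (k i))
          + ((∑ i ∈ D', a i • w i) + ∑ i ∈ Ds \ D', a i • e (σ i))‖ ≤ C * ‖x‖ := by
      intro D'
      induction D' using Finset.induction_on with
      | empty =>
        intro _ σ hσ
        rw [Finset.sdiff_empty] at hσ ⊢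
        simp only [Finset.sum_empty, zero_add]
        set l : ℕ → ℕ := fun i => if i ∈ Ds then σ i else k i with hldef
        have hlgap : Gap l := by
          intro i
          by_cases hiD : i ∈ Ds
          · simp only [hldef, if_pos hiD]
            exact ⟨le_of_lt (hSlow i (σ i) (hσ i hiD)), hShigh i (σ i) (hσ i hiD)⟩
          · simp only [hldef, if_neg hiD]
            exact ⟨le_rfl, hkmono (Nat.lt_succ_self i)⟩
        have hsum : ∑ i ∈ F, a i • e (l i)
            = (∑ i ∈ G, a i • e (k i)) + ∑ i ∈ Ds, a i • e (σ i) := by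
          rw [← Finset.sum_sdiff hGF, add_comm]
          congr 1
          · refine Finset.sum_congr rfl fun i hi => ?_
            have hiD : i ∉ Ds := fun hc => (Finset.mem_sdiff.1 hc).2 hi
            simp only [hldef, if_neg hiD]
          · refine Finset.sum_congr rfl fun i hi => ?_
            simp only [hldef, if_pos hi]
        rw [← hsum]
        exact hC l hlgap a F
      | @insert i0 D'' hi0 ih =>
        intro hsub σ hσ
        have hD''sub : D'' ⊆ Ds := (Finset.subset_insert i0 D'').trans hsub
        have hi0D : i0 ∈ Ds := hsub (Finset.mem_insert_self i0 D'')
        have hi0D'' : i0 ∉ D'' := hi0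
        set u := (∑ i ∈ G, a i • e (k i))
          + ((∑ i ∈ D'', a i • w i) + ∑ i ∈ Ds \ insert i0 D'', a i • e (σ i)) with hudef
        have hset : Ds \ D'' = insert i0 (Ds \ insert i0 D'') := by
          ext i
          simp only [Finset.mem_sdiff, Finset.mem_insert]
          constructor
          · rintro ⟨h1, h2⟩
            by_cases hii : i = i0
            · exact Or.inl hii
            · exact Or.inr ⟨h1, fun hc => h2 (by tauto)⟩
          · rintro (rfl | ⟨h1, h2⟩)
            · exact ⟨hi0D, hi0D''⟩
            · exact ⟨h1, fun hc => h2 (Or.inr hc)⟩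
        have hi0notin : i0 ∉ Ds \ insert i0 D'' := by
          simp [Finset.mem_sdiff]
        have hkey : ∀ j ∈ S i0, ‖u + a i0 • e j‖ ≤ C * ‖x‖ := by
          intro j hj
          have hσ' : ∀ i ∈ Ds \ D'', Function.update σ i0 j i ∈ S i := by
            intro i hi
            rcases eq_or_ne i i0 with rfl | hne2
            · rw [Function.update_self]; exact hj
            · rw [Function.update_of_ne hne2]
              obtain ⟨h1, h2⟩ := Finset.mem_sdiff.1 hi
              refine hσ i (Finset.mem_sdiff.2 ⟨h1, fun hc => ?_⟩)
              rcases Finset.mem_insert.1 hc with h | h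
              · exact hne2 h
              · exact h2 h
          have hihyp := ih hD''sub (Function.update σ i0 j) hσ'
          have hrw : ∑ i ∈ Ds \ D'', a i • e (Function.update σ i0 j i)
              = a i0 • e j + ∑ i ∈ Ds \ insert i0 D'', a i • e (σ i) := by
            rw [hset, Finset.sum_insert hi0notin, Function.update_self]
            congr 1
            refine Finset.sum_congr rfl fun i hi => ?_
            have hne2 : i ≠ i0 := by
              intro hii
              exact (Finset.mem_sdiff.1 hi).2 (by rw [hii]; exact Finset.mem_insert_self _ _)
            rw [Function.update_of_ne hne2]
          rw [hrw] at hihyp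
          have hveq : (∑ i ∈ G, a i • e (k i)) + ((∑ i ∈ D'', a i • w i)
              + (a i0 • e j + ∑ i ∈ Ds \ insert i0 D'', a i • e (σ i)))
              = u + a i0 • e j := by
            rw [hudef]; abel
          rw [hveq] at hihyp
          exact hihyp
        have hconv := qss_conv_bound (S i0) (c i0) (hS2 (k i0) i0) (hS3 (k i0) i0) e u (a i0)
          (C * ‖x‖) hkey
        have hgoal : (∑ i ∈ G, a i • e (k i)) + ((∑ i ∈ insert i0 D'', a i • w i)
            + ∑ i ∈ Ds \ insert i0 D'', a i • e (σ i))
            = u + a i0 • ∑ j ∈ S i0, c i0 j • e j := by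
          rw [Finset.sum_insert hi0D'', hudef]
          have hw : w i0 = ∑ j ∈ S i0, c i0 j • e j := rfl
          rw [hw]
          abel
        rw [hgoal]
        exact hconv
    have hmain := claim Ds le_rfl id (fun i hi => absurd hi (by simp))
    rw [Finset.sdiff_self, Finset.sum_empty, add_zero] at hmain
    have hgeo : ∑ i ∈ Ds, (2 : ℝ)⁻¹ ^ i ≤ 2 := by
      have h1 : ∑ i ∈ Ds, (2 : ℝ)⁻¹ ^ i ≤ ∑' i : ℕ, (2 : ℝ)⁻¹ ^ i := by
        refine Summable.sum_le_tsum Ds (fun i _ => by positivity) ?_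
        have : ((2 : ℝ)⁻¹) = 1 / 2 := by norm_num
        rw [this]
        exact summable_geometric_two
      have h2 : ∑' i : ℕ, (2 : ℝ)⁻¹ ^ i = 2 := by
        have : ((2 : ℝ)⁻¹) = 1 / 2 := by norm_num
        rw [this]
        exact tsum_geometric_two
      linarith
    have hwsum : ‖∑ i ∈ Ds, a i • w i‖ ≤ (2 * B / d * ‖x‖) * 2 := by
      calc ‖∑ i ∈ Ds, a i • w i‖ ≤ ∑ i ∈ Ds, ‖a i • w i‖ := norm_sum_le _ _
        _ ≤ ∑ i ∈ Ds, (2 * B / d * ‖x‖) * (2 : ℝ)⁻¹ ^ i := by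
            refine Finset.sum_le_sum fun i hi => ?_
            rw [norm_smul, Real.norm_eq_abs]
            exact mul_le_mul (coeff a F i (hDsF hi)) (hwnorm i) (norm_nonneg _) (by positivity)
        _ = (2 * B / d * ‖x‖) * ∑ i ∈ Ds, (2 : ℝ)⁻¹ ^ i := by rw [Finset.mul_sum]
        _ ≤ (2 * B / d * ‖x‖) * 2 := mul_le_mul_of_nonneg_left hgeo (by positivity)
    have hfinal : ‖∑ i ∈ G, a i • e (k i)‖ ≤ C * ‖x‖ + (2 * B / d * ‖x‖) * 2 := by
      have hre : ∑ i ∈ G, a i • e (k i)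
          = ((∑ i ∈ G, a i • e (k i)) + ∑ i ∈ Ds, a i • w i) - ∑ i ∈ Ds, a i • w i := by
        abel
      rw [hre]
      exact le_trans (norm_sub_le _ _) (add_le_add hmain hwsum)
    calc ‖∑ i ∈ G, a i • e (k i)‖ ≤ C * ‖x‖ + (2 * B / d * ‖x‖) * 2 := hfinal
      _ = (C + 4 * B / d) * ‖x‖ := by ring
  -- assemble the unconditional subsequence
  refine ⟨k, hkmono, ⟨⟨fun n => hne (k n), B, hB1, hBk⟩, 2 * (C + 4 * B / d), ?_⟩⟩
  intro a ε hε F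
  set P := F.filter (fun n => ε n = 1) with hP
  set N := F.filter (fun n => ¬ ε n = 1) with hN
  have hsplit : ∑ n ∈ F, (ε n * a n) • e (k n)
      = ∑ n ∈ P, (ε n * a n) • e (k n) + ∑ n ∈ N, (ε n * a n) • e (k n) :=
    (Finset.sum_filter_add_sum_filter_not F _ _).symm
  have hPsum : ∑ n ∈ P, (ε n * a n) • e (k n) = ∑ n ∈ P, a n • e (k n) :=
    Finset.sum_congr rfl fun n hn => by rw [(Finset.mem_filter.1 hn).2, one_mul]
  have hNsum : ∑ n ∈ N, (ε n * a n) • e (k n) = -∑ n ∈ N, a n • e (k n) := by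
    rw [← Finset.sum_neg_distrib]
    refine Finset.sum_congr rfl fun n hn => ?_
    have hεn : ε n = -1 := by
      rcases hε n with h | h
      · exact absurd h (Finset.mem_filter.1 hn).2
      · exact h
    rw [hεn, ← neg_smul]
    ring_nf
  have hPF : P ⊆ F := Finset.filter_subset _ _
  have hNF : N ⊆ F := Finset.filter_subset _ _
  calc ‖∑ n ∈ F, (ε n * a n) • e (k n)‖
      = ‖∑ n ∈ P, a n • e (k n) + -∑ n ∈ N, a n • e (k n)‖ := by
        rw [hsplit, hPsum, hNsum]
    _ ≤ ‖∑ n ∈ P, a n • e (k n)‖ + ‖∑ n ∈ N, a n • e (k n)‖ := by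
        refine le_trans (norm_add_le _ _) ?_
        rw [norm_neg]
    _ ≤ (C + 4 * B / d) * ‖∑ n ∈ F, a n • e (k n)‖
        + (C + 4 * B / d) * ‖∑ n ∈ F, a n • e (k n)‖ :=
        add_le_add (supp a F P hPF) (supp a F N hNF)
    _ = 2 * (C + 4 * B / d) * ‖∑ n ∈ F, a n • e (k n)‖ := by ring
end

section
/- If a Banach space X has a seminormalized Schauder basis (e_n) such that the sequence (e_n*) of biorthogonal functionals is a quasisubsymmetric basic sequence in X*, then ℓ∞ embeds isomorphically into L(X). -/
open Filter Topology

instance : Fact ((1 : ENNReal) ≤ ⊤) := ⟨le_top⟩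



open Filter Topology

section AuxQSS

variable {Y : Type*} [NormedAddCommGroup Y] [NormedSpace ℝ Y]

/-- convexity in one coordinate -/
lemma qss_aux_convex (Q u : Y) (t b : ℝ) (ht : |t| ≤ b) :
    ‖Q + t • u‖ ≤ max ‖Q + b • u‖ ‖Q + (-b) • u‖ := by
  have hb : 0 ≤ b := (abs_nonneg t).trans ht
  rcases eq_or_lt_of_le hb with hb0 | hb0
  · have : t = 0 := by
      have := abs_nonpos_iff.mp (ht.trans hb0.symm.le)
      simpa using this
    simp [this, ← hb0]
  · set θ : ℝ := (b + t) / (2 * b) with hθdef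
    have hta := neg_abs_le t
    have htb := le_abs_self t
    have hθ0 : 0 ≤ θ := div_nonneg (by linarith) (by linarith)
    have hθ1 : θ ≤ 1 := by
      rw [div_le_one (by linarith)]; linarith
    have h1 : θ * b + (1 - θ) * (-b) = t := by
      field_simp [hθdef]
      rw [hθdef]
      linear_combination (div_mul_cancel₀ (b + t) (show (2*b) ≠ 0 by positivity) : (b + t) / (2 * b) * (2 * b) = b + t)
    have key : θ • (Q + b • u) + (1 - θ) • (Q + (-b) • u) = Q + t • u := by
      calc θ • (Q + b • u) + (1 - θ) • (Q + (-b) • u)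
          = (θ + (1 - θ)) • Q + (θ * b + (1 - θ) * (-b)) • u := by
            rw [smul_add, smul_add, smul_smul, smul_smul, add_smul, add_smul]; abel
        _ = Q + t • u := by rw [h1]; norm_num
    rw [← key]
    set M := max ‖Q + b • u‖ ‖Q + (-b) • u‖ with hM
    calc ‖θ • (Q + b • u) + (1 - θ) • (Q + (-b) • u)‖
        ≤ ‖θ • (Q + b • u)‖ + ‖(1 - θ) • (Q + (-b) • u)‖ := norm_add_le _ _
      _ = θ * ‖Q + b • u‖ + (1 - θ) * ‖Q + (-b) • u‖ := by
          rw [norm_smul, norm_smul, Real.norm_eq_abs, Real.norm_eq_abs,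
            abs_of_nonneg hθ0, abs_of_nonneg (by linarith)]
      _ ≤ θ * M + (1 - θ) * M :=
          add_le_add (mul_le_mul_of_nonneg_left (le_max_left _ _) hθ0)
            (mul_le_mul_of_nonneg_left (le_max_right _ _) (by linarith))
      _ = M := by ring

/-- vertex reduction -/
lemma qss_aux_vertex (u : ℕ → Y) (b : ℝ) :
    ∀ (F : Finset ℕ) (f : ℕ → ℝ), (∀ n ∈ F, |f n| ≤ b) → ∀ P : Y,
    ∃ t : ℕ → Bool, ‖P + ∑ n ∈ F, f n • u n‖ ≤ ‖P + ∑ n ∈ F, (if t n then b else -b) • u n‖ := by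
  intro F
  induction F using Finset.induction_on with
  | empty => intro f _ P; exact ⟨fun _ => true, by simp⟩
  | @insert a F ha ih =>
    intro f hf P
    obtain ⟨t, htle⟩ := ih f (fun n hn => hf n (Finset.mem_insert_of_mem hn)) (P + f a • u a)
    set Q := P + ∑ n ∈ F, (if t n then b else -b) • u n with hQ
    have hconv := qss_aux_convex Q (u a) (f a) b (hf a (Finset.mem_insert_self a F))
    have h3 : ‖P + ∑ n ∈ insert a F, f n • u n‖ ≤ max ‖Q + b • u a‖ ‖Q + (-b) • u a‖ := by
      rw [Finset.sum_insert ha]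
      calc ‖P + (f a • u a + ∑ n ∈ F, f n • u n)‖
          = ‖(P + f a • u a) + ∑ n ∈ F, f n • u n‖ := by rw [add_assoc]
        _ ≤ ‖(P + f a • u a) + ∑ n ∈ F, (if t n then b else -b) • u n‖ := htle
        _ = ‖Q + f a • u a‖ := by rw [hQ, add_right_comm]
        _ ≤ max ‖Q + b • u a‖ ‖Q + (-b) • u a‖ := hconv
    have h4 : ∀ s : Bool, P + ∑ n ∈ insert a F, (if Function.update t a s n then b else -b) • u n
        = Q + (if s then b else -b) • u a := by
      intro s
      rw [Finset.sum_insert ha, Function.update_self, hQ]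
      have : ∑ n ∈ F, (if Function.update t a s n then b else -b) • u n
          = ∑ n ∈ F, (if t n then b else -b) • u n := by
        apply Finset.sum_congr rfl
        intro n hn
        have : n ≠ a := fun h => ha (h ▸ hn)
        rw [Function.update_of_ne this _ t]
      rw [this]
      abel
    rcases max_cases ‖Q + b • u a‖ ‖Q + (-b) • u a‖ with ⟨heq, -⟩ | ⟨heq, -⟩
    · refine ⟨Function.update t a true, ?_⟩
      rw [h4 true]
      exact heq ▸ h3
    · refine ⟨Function.update t a false, ?_⟩
      rw [h4 false]
      exact heq ▸ h3

end AuxQSS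

section AuxL1

variable {Y : Type*} [NormedAddCommGroup Y] [NormedSpace ℝ Y]

/-- coefficient functionals bound for a basic sequence -/
lemma qss_coeff_bound_s7 (v : ℕ → Y) (d' B : ℝ) (hv : ∀ m, d' ≤ ‖v m‖)
    (hBle : ∀ (a : ℕ → ℝ) (m M : ℕ), m ≤ M →
      ‖∑ n ∈ Finset.range m, a n • v n‖ ≤ B * ‖∑ n ∈ Finset.range M, a n • v n‖)
    (a : ℕ → ℝ) (F : Finset ℕ) (m : ℕ) (hm : m ∈ F) :
    |a m| * d' ≤ 2 * B * ‖∑ n ∈ F, a n • v n‖ := by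
  classical
  set a' : ℕ → ℝ := fun n => if n ∈ F then a n else 0 with ha'
  have hsum : ∀ M : ℕ, (∀ n ∈ F, n < M) →
      ∑ n ∈ Finset.range M, a' n • v n = ∑ n ∈ F, a n • v n := by
    intro M hM
    rw [← Finset.sum_subset (fun n hn => Finset.mem_range.mpr (hM n hn))
      (fun x _ hx => by simp [ha', hx])]
    exact Finset.sum_congr rfl (fun n hn => by simp [ha', hn])
  set M : ℕ := (F.sup id) + 1 with hM
  have hFM : ∀ n ∈ F, n < M := fun n hn => Nat.lt_succ_of_le (Finset.le_sup (f := id) hn)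
  have hmM : m + 1 ≤ M := Nat.succ_le_of_lt (hFM m hm)
  have key : a m • v m = (∑ n ∈ Finset.range (m+1), a' n • v n) -
      (∑ n ∈ Finset.range m, a' n • v n) := by
    rw [Finset.sum_range_succ]
    simp [ha', hm]
  have h1 : ‖a m • v m‖ ≤ 2 * B * ‖∑ n ∈ F, a n • v n‖ := by
    rw [key]
    calc ‖(∑ n ∈ Finset.range (m+1), a' n • v n) - (∑ n ∈ Finset.range m, a' n • v n)‖
        ≤ ‖∑ n ∈ Finset.range (m+1), a' n • v n‖ + ‖∑ n ∈ Finset.range m, a' n • v n‖ :=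
          norm_sub_le _ _
      _ ≤ B * ‖∑ n ∈ Finset.range M, a' n • v n‖ + B * ‖∑ n ∈ Finset.range M, a' n • v n‖ :=
          add_le_add (hBle a' (m+1) M hmM) (hBle a' m M (Nat.le_of_succ_le hmM))
      _ = 2 * B * ‖∑ n ∈ Finset.range M, a' n • v n‖ := by ring
      _ = 2 * B * ‖∑ n ∈ F, a n • v n‖ := by rw [hsum M hFM]
  calc |a m| * d' ≤ |a m| * ‖v m‖ := by
        apply mul_le_mul_of_nonneg_left (hv m) (abs_nonneg _)
    _ = ‖a m • v m‖ := by rw [norm_smul, Real.norm_eq_abs]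
    _ ≤ _ := h1

/-- initial interval projections bound -/
lemma qss_init_proj (v : ℕ → Y) (B : ℝ)
    (hBle : ∀ (a : ℕ → ℝ) (m M : ℕ), m ≤ M →
      ‖∑ n ∈ Finset.range m, a n • v n‖ ≤ B * ‖∑ n ∈ Finset.range M, a n • v n‖)
    (a : ℕ → ℝ) (F : Finset ℕ) (R : ℕ) :
    ‖∑ n ∈ F.filter (fun n => n < R), a n • v n‖ ≤ B * ‖∑ n ∈ F, a n • v n‖ := by
  classical
  set a' : ℕ → ℝ := fun n => if n ∈ F then a n else 0 with ha'
  set M : ℕ := max ((F.sup id) + 1) R with hM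
  have hFM : ∀ n ∈ F, n < M := fun n hn =>
    lt_of_lt_of_le (Nat.lt_succ_of_le (Finset.le_sup (f := id) hn)) (le_max_left _ _)
  have hsumF : ∑ n ∈ Finset.range M, a' n • v n = ∑ n ∈ F, a n • v n := by
    rw [← Finset.sum_subset (fun n hn => Finset.mem_range.mpr (hFM n hn))
      (fun x _ hx => by simp [ha', hx])]
    exact Finset.sum_congr rfl (fun n hn => by simp [ha', hn])
  have hsum1 : ∑ n ∈ Finset.range R, a' n • v n = ∑ n ∈ F.filter (fun n => n < R), a n • v n := by
    rw [← Finset.sum_subset (fun n hn => Finset.mem_range.mpr (Finset.mem_filter.mp hn).2)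
      (fun x hx hxf => ?_)]
    · exact Finset.sum_congr rfl
        (fun n hn => by simp [ha', (Finset.mem_filter.mp hn).1])
    · have : x ∉ F := fun hxF => hxf (Finset.mem_filter.mpr ⟨hxF, Finset.mem_range.mp hx⟩)
      simp [ha', this]
  rw [← hsum1, ← hsumF]
  exact hBle a' R M (le_max_right _ _)

/-- Uniform quasisubsymmetry constant for the doubling patterns. -/
lemma qss_uniform (v : ℕ → Y) (d' B : ℝ) (hd' : 0 < d') (hv : ∀ m, d' ≤ ‖v m‖) (hB : 1 ≤ B)
    (hBle : ∀ (a : ℕ → ℝ) (m M : ℕ), m ≤ M →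
      ‖∑ n ∈ Finset.range m, a n • v n‖ ≤ B * ‖∑ n ∈ Finset.range M, a n • v n‖)
    (hq : QuasiSubsymmetric v) :
    ∃ C : ℝ, 0 < C ∧ ∀ (t : ℕ → Bool) (a : ℕ → ℝ) (F : Finset ℕ),
      ‖∑ n ∈ F, a n • v (2*n + (if t n then 1 else 0))‖ ≤ C * ‖∑ n ∈ F, a n • v n‖ := by
  classical
  by_contra hcon
  push_neg at hcon
  -- step 1: witnesses can be chosen with support far to the right
  have glide : ∀ (R : ℕ) (C : ℝ), ∃ (t : ℕ → Bool) (a : ℕ → ℝ) (F : Finset ℕ),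
      (∀ n ∈ F, R ≤ n) ∧
      C * ‖∑ n ∈ F, a n • v n‖ < ‖∑ n ∈ F, a n • v (2*n + (if t n then 1 else 0))‖ := by
    intro R C
    by_contra hg
    push_neg at hg
    -- hg : ∀ t a F, (∀ n ∈ F, R ≤ n) → ‖∑ ls‖ ≤ C * ‖∑‖
    set E : ℝ := ∑ m ∈ Finset.range (2*R), ‖v m‖ with hE
    have hE0 : 0 ≤ E := Finset.sum_nonneg (fun m _ => norm_nonneg _)
    set C' : ℝ := max C 0 with hC'
    have hC'0 : 0 ≤ C' := le_max_right _ _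
    set Cb : ℝ := C' * (1 + B) + (2 * B / d') * E * R + 1 with hCb
    have hterm2 : 0 ≤ (2 * B / d') * E * R :=
      mul_nonneg (mul_nonneg (by positivity) hE0) (Nat.cast_nonneg R)
    have hCb0 : 0 < Cb := by
      have : 0 ≤ C' * (1 + B) := mul_nonneg hC'0 (by linarith)
      rw [hCb]; linarith
    obtain ⟨t, a, F, hlt⟩ := hcon Cb hCb0
    have hS0 : (0:ℝ) ≤ ‖∑ n ∈ F, a n • v n‖ := norm_nonneg _
    -- split F
    have hsplit := (Finset.sum_filter_add_sum_filter_not F (fun n => n < R)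
      (fun n => a n • v (2*n + (if t n then 1 else 0)))).symm
    set F1 := F.filter (fun n => n < R) with hF1
    set F2 := F.filter (fun n => ¬ n < R) with hF2
    -- head bound
    have hhead : ‖∑ n ∈ F1, a n • v (2*n + (if t n then 1 else 0))‖
        ≤ (2 * B / d') * E * R * ‖∑ n ∈ F, a n • v n‖ := by
      calc ‖∑ n ∈ F1, a n • v (2*n + (if t n then 1 else 0))‖
          ≤ ∑ n ∈ F1, ‖a n • v (2*n + (if t n then 1 else 0))‖ := norm_sum_le _ _
        _ ≤ ∑ n ∈ F1, (2 * B / d') * ‖∑ m ∈ F, a m • v m‖ * E := by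
            apply Finset.sum_le_sum
            intro n hn
            rw [norm_smul, Real.norm_eq_abs]
            have hnF : n ∈ F := (Finset.mem_filter.mp hn).1
            have hnR : n < R := (Finset.mem_filter.mp hn).2
            have hcoeff : |a n| ≤ (2 * B / d') * ‖∑ m ∈ F, a m • v m‖ := by
              have := qss_coeff_bound_s7 v d' B hv hBle a F n hnF
              rw [div_mul_eq_mul_div, le_div_iff₀ hd']
              linarith [this]
            have hvle : ‖v (2*n + (if t n then 1 else 0))‖ ≤ E := by
              rw [hE]
              apply Finset.single_le_sum (f := fun m => ‖v m‖) (fun m _ => norm_nonneg _)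
              apply Finset.mem_range.mpr
              split <;> omega
            exact mul_le_mul hcoeff hvle (norm_nonneg _) (by positivity)
        _ ≤ R * ((2 * B / d') * ‖∑ m ∈ F, a m • v m‖ * E) := by
            rw [Finset.sum_const, nsmul_eq_mul]
            apply mul_le_mul_of_nonneg_right _ (by positivity)
            have : F1 ⊆ Finset.range R := fun n hn =>
              Finset.mem_range.mpr (Finset.mem_filter.mp hn).2
            exact_mod_cast Nat.cast_le.mpr ((Finset.card_le_card this).trans_eq
              (Finset.card_range R))
        _ = (2 * B / d') * E * R * ‖∑ n ∈ F, a n • v n‖ := by ring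
    -- tail bound
    have htail : ‖∑ n ∈ F2, a n • v (2*n + (if t n then 1 else 0))‖
        ≤ C' * (1 + B) * ‖∑ n ∈ F, a n • v n‖ := by
      have h2 : ‖∑ n ∈ F2, a n • v (2*n + (if t n then 1 else 0))‖
          ≤ C * ‖∑ n ∈ F2, a n • v n‖ :=
        hg t a F2 (fun n hn => not_lt.mp (Finset.mem_filter.mp hn).2)
      have h3 : ‖∑ n ∈ F2, a n • v n‖ ≤ (1 + B) * ‖∑ n ∈ F, a n • v n‖ := by
        have hfadd := Finset.sum_filter_add_sum_filter_not F (fun n => n < R)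
          (fun n => a n • v n)
        have : ∑ n ∈ F2, a n • v n = (∑ n ∈ F, a n • v n) - ∑ n ∈ F1, a n • v n := by
          rw [← hfadd]; abel
        rw [this]
        calc ‖(∑ n ∈ F, a n • v n) - ∑ n ∈ F1, a n • v n‖
            ≤ ‖∑ n ∈ F, a n • v n‖ + ‖∑ n ∈ F1, a n • v n‖ := norm_sub_le _ _
          _ ≤ ‖∑ n ∈ F, a n • v n‖ + B * ‖∑ n ∈ F, a n • v n‖ :=
              add_le_add le_rfl (qss_init_proj v B hBle a F R)
          _ = (1 + B) * ‖∑ n ∈ F, a n • v n‖ := by ring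
      calc ‖∑ n ∈ F2, a n • v (2*n + (if t n then 1 else 0))‖
          ≤ C * ‖∑ n ∈ F2, a n • v n‖ := h2
        _ ≤ C' * ‖∑ n ∈ F2, a n • v n‖ :=
            mul_le_mul_of_nonneg_right (le_max_left _ _) (norm_nonneg _)
        _ ≤ C' * ((1 + B) * ‖∑ n ∈ F, a n • v n‖) := mul_le_mul_of_nonneg_left h3 hC'0
        _ = C' * (1 + B) * ‖∑ n ∈ F, a n • v n‖ := by ring
    have hfinal : ‖∑ n ∈ F, a n • v (2*n + (if t n then 1 else 0))‖
        ≤ (Cb - 1) * ‖∑ n ∈ F, a n • v n‖ := by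
      rw [hsplit]
      calc ‖(∑ n ∈ F1, a n • v (2*n + (if t n then 1 else 0))) +
            ∑ n ∈ F2, a n • v (2*n + (if t n then 1 else 0))‖
          ≤ ‖∑ n ∈ F1, a n • v (2*n + (if t n then 1 else 0))‖ +
            ‖∑ n ∈ F2, a n • v (2*n + (if t n then 1 else 0))‖ := norm_add_le _ _
        _ ≤ (2 * B / d') * E * R * ‖∑ n ∈ F, a n • v n‖ +
            C' * (1 + B) * ‖∑ n ∈ F, a n • v n‖ := add_le_add hhead htail
        _ = (Cb - 1) * ‖∑ n ∈ F, a n • v n‖ := by rw [hCb]; ring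
    have : Cb * ‖∑ n ∈ F, a n • v n‖ < (Cb - 1) * ‖∑ n ∈ F, a n • v n‖ :=
      lt_of_lt_of_le hlt hfinal
    nlinarith [hS0]
  -- step 2: recursion
  have h' : ∀ (R j : ℕ), ∃ (t : ℕ → Bool) (a : ℕ → ℝ) (F : Finset ℕ),
      (∀ n ∈ F, R ≤ n) ∧ ((j:ℝ)+1) * ‖∑ n ∈ F, a n • v n‖ <
        ‖∑ n ∈ F, a n • v (2*n + (if t n then 1 else 0))‖ :=
    fun R j => glide R ((j:ℝ)+1)
  choose t a F hmem hlt using h'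
  let R : ℕ → ℕ := fun j => Nat.rec 0 (fun i Ri => max (Ri + 1) ((F Ri i).sup id + 1)) j
  have hRsucc : ∀ j, R (j+1) = max (R j + 1) ((F (R j) j).sup id + 1) := fun j => rfl
  have hRmono : StrictMono R := strictMono_nat_of_lt_succ (fun j => by
    rw [hRsucc]; exact lt_of_lt_of_le (Nat.lt_succ_self _) (le_max_left _ _))
  have hFup : ∀ j, ∀ n ∈ F (R j) j, n < R (j+1) := fun j n hn => by
    rw [hRsucc]
    exact lt_of_le_of_lt (Finset.le_sup (f := id) hn)
      (lt_of_lt_of_le (Nat.lt_succ_self _) (le_max_right _ _))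
  have huniq : ∀ i j n, n ∈ F (R i) i → n ∈ F (R j) j → i = j := by
    intro i j n hi hj
    by_contra hne
    rcases Nat.lt_or_ge i j with hij | hij
    · have h1 := hFup i n hi
      have h2 := hmem (R j) j n hj
      have h3 : R (i+1) ≤ R j := hRmono.le_iff_le.mpr hij
      omega
    · have hij' : j < i := lt_of_le_of_ne hij (fun h => hne h.symm)
      have h1 := hFup j n hj
      have h2 := hmem (R i) i n hi
      have h3 : R (j+1) ≤ R i := hRmono.le_iff_le.mpr hij'
      omega
  let s : ℕ → Bool := fun n => if h : ∃ j, n ∈ F (R j) j then t (R h.choose) h.choose n else false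
  have hs : ∀ j n, n ∈ F (R j) j → s n = t (R j) j n := by
    intro j n hn
    have hex : ∃ i, n ∈ F (R i) i := ⟨j, hn⟩
    have heq : hex.choose = j := huniq _ _ n hex.choose_spec hn
    simp only [s, dif_pos hex, heq]
  let l : ℕ → ℕ := fun n => 2*n + (if s n then 1 else 0)
  have hlmono : StrictMono l := strictMono_nat_of_lt_succ (fun n => by
    simp only [l]; split <;> split <;> omega)
  have hkl : ∀ n, id n ≤ l n := fun n => by simp only [l, id]; omega
  obtain ⟨Cs, hCs0, hdom⟩ := hq id l strictMono_id hlmono hkl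
  set j := ⌈Cs⌉₊ with hj
  have h1 := hlt (R j) j
  have h2 := hdom (a (R j) j) (F (R j) j)
  have hsumeq : ∑ n ∈ F (R j) j, a (R j) j n • v (2*n + (if t (R j) j n then 1 else 0))
      = ∑ n ∈ F (R j) j, a (R j) j n • v (l n) := by
    apply Finset.sum_congr rfl
    intro n hn
    have : l n = 2*n + (if t (R j) j n then 1 else 0) := by
      simp only [l, hs j n hn]
    rw [this]
  rw [hsumeq] at h1
  have hCsj : Cs ≤ (j:ℝ) + 1 := le_trans (Nat.le_ceil Cs) (by rw [hj]; norm_num)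
  have hS0 : (0:ℝ) ≤ ‖∑ n ∈ F (R j) j, a (R j) j n • v n‖ := norm_nonneg _
  have h2' : ‖∑ n ∈ F (R j) j, a (R j) j n • v (l n)‖
      ≤ Cs * ‖∑ n ∈ F (R j) j, a (R j) j n • v n‖ := h2
  nlinarith [h1, h2', hCsj, hS0]

end AuxL1

section MainProof

variable {X : Type*} [NormedAddCommGroup X] [NormedSpace ℝ X]

/-- partial sums of the multiplier operator -/
def psumDef (e : ℕ → X) (es : ℕ → X →L[ℝ] ℝ) (f : ℕ → ℝ) (x : X) (N : ℕ) : X :=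
  ∑ n ∈ Finset.range N, (f n * (es (2*n+1) x - es (2*n) x)) • e n

end MainProof

set_option maxHeartbeats 1000000

/-- **Theorem 2.9.** If a Banach space `X` has a seminormalized Schauder basis `(e n)`
whose biorthogonal functionals `(es n)` form a quasisubsymmetric basic sequence in `X*`,
then `ℓ∞` embeds isomorphically into `L(X)`. -/
theorem linfty_embeds_in_LX_of_biorthogonal_qss
    {X : Type*} [NormedAddCommGroup X] [NormedSpace ℝ X] [CompleteSpace X]
    (e : ℕ → X) (es : ℕ → X →L[ℝ] ℝ)
    (hbasis : IsSchauderBasis e) (hsemi : Seminormalized e)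
    (hbiorth : ∀ n m, es n (e m) = if n = m then 1 else 0)
    (hbasic : IsBasicSeq es) (hqss : QuasiSubsymmetric es) :
    ∃ T : lp (fun _ : ℕ => ℝ) ⊤ →L[ℝ] (X →L[ℝ] X),
      Function.Injective T ∧ ∃ c : ℝ, 0 < c ∧ ∀ f, c * ‖f‖ ≤ ‖T f‖ := by
  classical
  obtain ⟨d, D, hd, hdD⟩ := hsemi
  have hD : 0 < D := lt_of_lt_of_le hd ((hdD 0).1.trans (hdD 0).2)
  obtain ⟨hne, B, hB1, hBle⟩ := hbasic
  -- lower bound for the biorthogonal functionals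
  have hesl : ∀ m, 1/D ≤ ‖es m‖ := by
    intro m
    rw [div_le_iff₀ hD]
    have h1 : es m (e m) = 1 := by rw [hbiorth m m]; simp
    have h2 : ‖es m (e m)‖ ≤ ‖es m‖ * ‖e m‖ := (es m).le_opNorm _
    rw [h1, norm_one] at h2
    calc (1:ℝ) ≤ ‖es m‖ * ‖e m‖ := h2
      _ ≤ ‖es m‖ * D := mul_le_mul_of_nonneg_left (hdD m).2 (norm_nonneg _)
  -- partial sum projections
  set SN : ℕ → X →L[ℝ] X := fun N => ∑ n ∈ Finset.range N, (es n).smulRight (e n) with hSNdef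
  have hSNapply : ∀ N x, SN N x = ∑ n ∈ Finset.range N, es n x • e n := by
    intro N x
    rw [hSNdef]
    simp [ContinuousLinearMap.sum_apply]
  have hesSN : ∀ k N x, es k (SN N x) = if k < N then es k x else 0 := by
    intro k N x
    rw [hSNapply, map_sum]
    have hcongr : ∀ n ∈ Finset.range N, es k (es n x • e n) = (if k = n then es n x else 0) := by
      intro n _
      rw [map_smul, hbiorth k n]
      split <;> simp [*]
    rw [Finset.sum_congr rfl hcongr, Finset.sum_ite_eq (Finset.range N) k (fun n => es n x)]
    simp [Finset.mem_range]
  have hSNtendsto : ∀ x : X, Tendsto (fun N => SN N x) atTop (𝓝 x) := by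
    intro x
    obtain ⟨A, hA, -⟩ := hbasis x
    have hAe : ∀ m, A m = es m x := by
      intro m
      have h1 : Tendsto (fun M => es m (∑ n ∈ Finset.range M, A n • e n)) atTop (𝓝 (es m x)) :=
        ((es m).continuous.tendsto x).comp hA
      have h3 : Tendsto (fun M => es m (∑ n ∈ Finset.range M, A n • e n)) atTop (𝓝 (A m)) := by
        have hev : (fun _ : ℕ => A m) =ᶠ[atTop] (fun M => es m (∑ n ∈ Finset.range M, A n • e n)) := by
          filter_upwards [eventually_ge_atTop (m+1)] with M hM
          symm
          rw [map_sum]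
          have hcongr : ∀ n ∈ Finset.range M, es m (A n • e n) = (if m = n then A n else 0) := by
            intro n _
            rw [map_smul, hbiorth m n]
            split <;> simp [*]
          rw [Finset.sum_congr rfl hcongr, Finset.sum_ite_eq (Finset.range M) m A,
            if_pos (Finset.mem_range.mpr (by omega))]
        exact tendsto_const_nhds.congr' hev
      exact tendsto_nhds_unique h3 h1
    have heq : (fun N => SN N x) = fun N => ∑ n ∈ Finset.range N, A n • e n := by
      funext N
      rw [hSNapply]
      exact Finset.sum_congr rfl (fun n _ => by rw [hAe n])
    rw [heq]
    exact hA
  obtain ⟨C₀', hC₀'⟩ := banach_steinhaus (g := SN) (fun x => by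
    obtain ⟨Cx, hCx⟩ := (hSNtendsto x).norm.bddAbove_range
    exact ⟨Cx, fun N => hCx (Set.mem_range_self N)⟩)
  set C₀ : ℝ := max C₀' 0 with hC₀def
  have hC₀0 : 0 ≤ C₀ := le_max_right _ _
  have hC₀ : ∀ N, ‖SN N‖ ≤ C₀ := fun N => (hC₀' N).trans (le_max_left _ _)
  -- dual estimate
  have hdual : ∀ (g : X →L[ℝ] ℝ) (N : ℕ), ‖∑ n ∈ Finset.range N, g (e n) • es n‖ ≤ C₀ * ‖g‖ := by
    intro g N
    have heq : ∑ n ∈ Finset.range N, g (e n) • es n = g.comp (SN N) := by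
      ext x
      simp only [ContinuousLinearMap.coe_sum', Finset.sum_apply,
        ContinuousLinearMap.smul_apply, ContinuousLinearMap.comp_apply]
      rw [hSNapply, map_sum]
      apply Finset.sum_congr rfl
      intro n _
      rw [map_smul]
      simp only [smul_eq_mul]
      ring
    rw [heq]
    calc ‖g.comp (SN N)‖ ≤ ‖g‖ * ‖SN N‖ := g.opNorm_comp_le (SN N)
      _ ≤ ‖g‖ * C₀ := mul_le_mul_of_nonneg_left (hC₀ N) (norm_nonneg g)
      _ = C₀ * ‖g‖ := mul_comm _ _
  -- uniform qss constant
  obtain ⟨C, hC0, hC⟩ := qss_uniform es (1/D) B (by positivity) hesl hB1 hBle hqss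
  -- sign reduction bound
  have hL2a : ∀ (F : Finset ℕ) (f c : ℕ → ℝ) (b : ℝ), 0 ≤ b → (∀ n ∈ F, |f n| ≤ b) →
      ‖∑ n ∈ F, (f n * c n) • (es (2*n+1) - es (2*n))‖ ≤ 2*C*b*‖∑ n ∈ F, c n • es n‖ := by
    intro F f c b hb hf
    set u : ℕ → (X →L[ℝ] ℝ) := fun n => c n • (es (2*n+1) - es (2*n)) with hu
    have hfu : ∀ n, (f n * c n) • (es (2*n+1) - es (2*n)) = f n • u n := by
      intro n
      rw [hu, smul_smul]
    obtain ⟨t, ht⟩ := qss_aux_vertex u b F f hf 0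
    rw [zero_add, zero_add] at ht
    have heq2 : ∑ n ∈ F, (if t n then b else -b) • u n
        = b • ((∑ n ∈ F, c n • es (2*n + (if t n then 1 else 0))) -
               (∑ n ∈ F, c n • es (2*n + (if !(t n) then 1 else 0)))) := by
      rw [smul_sub, Finset.smul_sum, Finset.smul_sum, ← Finset.sum_sub_distrib]
      apply Finset.sum_congr rfl
      intro n _
      cases htn : t n
      · simp only [htn, Bool.not_false, if_neg (Bool.false_ne_true), if_pos rfl]
        rw [hu]
        norm_num
        module
      · simp only [htn, Bool.not_true, if_pos rfl, if_neg (Bool.false_ne_true)]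
        rw [hu]
        norm_num
        module
    calc ‖∑ n ∈ F, (f n * c n) • (es (2*n+1) - es (2*n))‖
        = ‖∑ n ∈ F, f n • u n‖ := by rw [Finset.sum_congr rfl (fun n _ => hfu n)]
      _ ≤ ‖∑ n ∈ F, (if t n then b else -b) • u n‖ := ht
      _ = ‖b • ((∑ n ∈ F, c n • es (2*n + (if t n then 1 else 0))) -
               (∑ n ∈ F, c n • es (2*n + (if !(t n) then 1 else 0))))‖ := by rw [heq2]
      _ ≤ b * (‖∑ n ∈ F, c n • es (2*n + (if t n then 1 else 0))‖ +
               ‖∑ n ∈ F, c n • es (2*n + (if !(t n) then 1 else 0))‖) := by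
          have h1 : ‖b • ((∑ n ∈ F, c n • es (2*n + (if t n then 1 else 0))) -
               (∑ n ∈ F, c n • es (2*n + (if !(t n) then 1 else 0))))‖
              = |b| * ‖(∑ n ∈ F, c n • es (2*n + (if t n then 1 else 0))) -
               (∑ n ∈ F, c n • es (2*n + (if !(t n) then 1 else 0)))‖ := by
            rw [show ∀ (z : X →L[ℝ] ℝ), ‖b • z‖ = ‖b‖ * ‖z‖ from fun z => norm_smul b z,
              Real.norm_eq_abs]
          rw [h1, abs_of_nonneg hb]
          exact mul_le_mul_of_nonneg_left (norm_sub_le _ _) hb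
      _ ≤ b * (C * ‖∑ n ∈ F, c n • es n‖ + C * ‖∑ n ∈ F, c n • es n‖) := by
          apply mul_le_mul_of_nonneg_left _ hb
          exact add_le_add (hC t c F) (hC (fun n => !(t n)) c F)
      _ = 2*C*b*‖∑ n ∈ F, c n • es n‖ := by ring
  -- main operator bound
  set K : ℝ := 2*C*C₀ with hK
  have hK0 : 0 ≤ K := by
    rw [hK]
    exact mul_nonneg (by linarith) hC₀0
  have hL2 : ∀ (f : ℕ → ℝ) (b : ℝ), 0 ≤ b → (∀ n, |f n| ≤ b) → ∀ (N : ℕ) (x : X),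
      ‖∑ n ∈ Finset.range N, (f n * (es (2*n+1) x - es (2*n) x)) • e n‖ ≤ K * b * ‖x‖ := by
    intro f b hb hf N x
    set w : X := ∑ n ∈ Finset.range N, (f n * (es (2*n+1) x - es (2*n) x)) • e n with hw
    have hKb : (0:ℝ) ≤ K * b * ‖x‖ := mul_nonneg (mul_nonneg hK0 hb) (norm_nonneg x)
    rcases eq_or_ne w 0 with h0 | h0
    · rw [h0, norm_zero]
      exact hKb
    obtain ⟨g, hg1, hgw⟩ := exists_dual_vector ℝ w (norm_ne_zero_iff.mpr h0)
    have key : g w = (∑ n ∈ Finset.range N, (f n * g (e n)) • (es (2*n+1) - es (2*n))) x := by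
      rw [hw, map_sum]
      simp only [ContinuousLinearMap.coe_sum', Finset.sum_apply,
        ContinuousLinearMap.smul_apply, ContinuousLinearMap.sub_apply, smul_eq_mul, map_smul]
      apply Finset.sum_congr rfl
      intro n _
      ring
    have hgw' : g w = ‖w‖ := by exact_mod_cast hgw
    calc ‖w‖ = (∑ n ∈ Finset.range N, (f n * g (e n)) • (es (2*n+1) - es (2*n))) x := by
          rw [← key, hgw']
      _ ≤ ‖∑ n ∈ Finset.range N, (f n * g (e n)) • (es (2*n+1) - es (2*n))‖ * ‖x‖ := by
          refine le_trans (le_abs_self _) ?_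
          rw [← Real.norm_eq_abs]
          exact (∑ n ∈ Finset.range N, (f n * g (e n)) • (es (2*n+1) - es (2*n))).le_opNorm x
      _ ≤ (2*C*b*‖∑ n ∈ Finset.range N, g (e n) • es n‖) * ‖x‖ := by
          apply mul_le_mul_of_nonneg_right _ (norm_nonneg x)
          exact hL2a (Finset.range N) f (fun n => g (e n)) b hb (fun n _ => hf n)
      _ ≤ (2*C*b*(C₀ * ‖g‖)) * ‖x‖ := by
          apply mul_le_mul_of_nonneg_right _ (norm_nonneg x)
          apply mul_le_mul_of_nonneg_left (hdual g N) (by positivity)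
      _ = K * b * ‖x‖ := by
          rw [hg1, hK]
          ring
  -- partial sums of the multiplier operator
  have hpsum_le : ∀ (f : ℕ → ℝ) (b : ℝ), 0 ≤ b → (∀ n, |f n| ≤ b) → ∀ (x : X) (N : ℕ),
      ‖psumDef e es f x N‖ ≤ K * b * ‖x‖ := by
    intro f b hb hf x N
    exact hL2 f b hb hf N x
  have hdiff : ∀ (f : ℕ → ℝ) (b : ℝ), 0 ≤ b → (∀ n, |f n| ≤ b) → ∀ (x : X) (M N : ℕ), M ≤ N →
      ‖psumDef e es f x N - psumDef e es f x M‖ ≤ K * b * ‖x - SN (2*M) x‖ := by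
    intro f b hb hf x M N hMN
    set f' : ℕ → ℝ := fun n => if n < M then 0 else f n with hf'
    set x' : X := x - SN (2*M) x with hx'
    have hfil : (Finset.range N).filter (fun n => n < M) = Finset.range M := by
      ext n
      simp only [Finset.mem_filter, Finset.mem_range]
      omega
    have hMeq : psumDef e es f x M = ∑ n ∈ Finset.range N,
        (if n < M then (f n * (es (2*n+1) x - es (2*n) x)) • e n else 0) := by
      unfold psumDef
      rw [← Finset.sum_filter, hfil]
    have hsub : psumDef e es f x N - psumDef e es f x M
        = ∑ n ∈ Finset.range N, (f' n * (es (2*n+1) x' - es (2*n) x')) • e n := by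
      rw [hMeq]
      unfold psumDef
      rw [← Finset.sum_sub_distrib]
      refine Finset.sum_congr rfl (fun n _ => ?_)
      by_cases hnM : n < M
      · rw [if_pos hnM, sub_self]
        have hfn : f' n = 0 := by rw [hf']; simp [hnM]
        rw [hfn, zero_mul, zero_smul]
      · rw [if_neg hnM, sub_zero]
        have hfn : f' n = f n := by rw [hf']; simp [hnM]
        have h1 : es (2*n+1) x' = es (2*n+1) x := by
          rw [hx', map_sub, hesSN (2*n+1) (2*M) x, if_neg (by omega)]
          ring
        have h2 : es (2*n) x' = es (2*n) x := by
          rw [hx', map_sub, hesSN (2*n) (2*M) x, if_neg (by omega)]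
          ring
        rw [hfn, h1, h2]
    rw [hsub]
    have hf'b : ∀ n, |f' n| ≤ b := by
      intro n
      rw [hf']
      dsimp only
      split
      · simpa using hb
      · exact hf n
    exact hL2 f' b hb hf'b N x'
  have hcauchy : ∀ (f : ℕ → ℝ) (b : ℝ), 0 ≤ b → (∀ n, |f n| ≤ b) → ∀ x : X,
      ∃ y, Tendsto (fun N => psumDef e es f x N) atTop (𝓝 y) := by
    intro f b hb hf x
    have hcs : CauchySeq (fun N => psumDef e es f x N) := by
      apply cauchySeq_of_le_tendsto_0 (fun N => 2 * (K * b * ‖x - SN (2*N) x‖))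
      · intro m n N hm hn
        rw [dist_eq_norm]
        have hsplit : psumDef e es f x m - psumDef e es f x n
            = (psumDef e es f x m - psumDef e es f x N) +
              (psumDef e es f x N - psumDef e es f x n) := by abel
        calc ‖psumDef e es f x m - psumDef e es f x n‖
            ≤ ‖psumDef e es f x m - psumDef e es f x N‖ +
              ‖psumDef e es f x N - psumDef e es f x n‖ := by
              rw [hsplit]; exact norm_add_le _ _
          _ ≤ K*b*‖x - SN (2*N) x‖ + K*b*‖x - SN (2*N) x‖ := by
              refine add_le_add (hdiff f b hb hf x N m hm) ?_
              rw [norm_sub_rev]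
              exact hdiff f b hb hf x N n hn
          _ = 2*(K*b*‖x - SN (2*N) x‖) := by ring
      · have h2N : Tendsto (fun N : ℕ => SN (2*N) x) atTop (𝓝 x) :=
          (hSNtendsto x).comp (tendsto_atTop_mono (fun N => show N ≤ 2*N by omega) tendsto_id)
        have hnorm0 : Tendsto (fun N => ‖x - SN (2*N) x‖) atTop (𝓝 0) := by
          have hsub : Tendsto (fun N : ℕ => x - SN (2*N) x) atTop (𝓝 (x - x)) :=
            tendsto_const_nhds.sub h2N
          rw [sub_self] at hsub
          simpa using hsub.norm
        have := hnorm0.const_mul (2*(K*b))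
        simp only [mul_zero] at this
        refine this.congr (fun N => by ring)
    exact cauchySeq_tendsto_of_complete hcs
  -- the limit operator
  have hcoebound : ∀ (f : lp (fun _ : ℕ => ℝ) ⊤) (n : ℕ), |(f : ℕ → ℝ) n| ≤ ‖f‖ := by
    intro f n
    rw [← Real.norm_eq_abs]
    exact lp.norm_apply_le_norm ENNReal.top_ne_zero f n
  have hSfun : ∀ (f : lp (fun _ : ℕ => ℝ) ⊤) (x : X),
      ∃ y, Tendsto (fun N => psumDef e es (f : ℕ → ℝ) x N) atTop (𝓝 y) :=
    fun f x => hcauchy (f : ℕ → ℝ) ‖f‖ (norm_nonneg f) (hcoebound f) x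
  set Sfun : lp (fun _ : ℕ => ℝ) ⊤ → X → X := fun f x => (hSfun f x).choose with hSfundef
  have htend : ∀ (f : lp (fun _ : ℕ => ℝ) ⊤) (x : X),
      Tendsto (fun N => psumDef e es (f : ℕ → ℝ) x N) atTop (𝓝 (Sfun f x)) :=
    fun f x => (hSfun f x).choose_spec
  -- linearity in x
  have hpsum_add : ∀ (f : ℕ → ℝ) (x y : X) (N : ℕ),
      psumDef e es f (x + y) N = psumDef e es f x N + psumDef e es f y N := by
    intro f x y N
    unfold psumDef
    rw [← Finset.sum_add_distrib]
    refine Finset.sum_congr rfl (fun n _ => ?_)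
    rw [map_add, map_add, ← add_smul]
    congr 1
    ring
  have hpsum_smul : ∀ (f : ℕ → ℝ) (c : ℝ) (x : X) (N : ℕ),
      psumDef e es f (c • x) N = c • psumDef e es f x N := by
    intro f c x N
    unfold psumDef
    rw [Finset.smul_sum]
    refine Finset.sum_congr rfl (fun n _ => ?_)
    rw [map_smul, map_smul, smul_smul]
    congr 1
    simp only [smul_eq_mul]
    ring
  have hSfun_add : ∀ f (x y : X), Sfun f (x + y) = Sfun f x + Sfun f y := by
    intro f x y
    refine tendsto_nhds_unique (htend f (x+y)) ?_
    exact ((htend f x).add (htend f y)).congr (fun N => (hpsum_add (f : ℕ → ℝ) x y N).symm)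
  have hSfun_smul : ∀ f (c : ℝ) (x : X), Sfun f (c • x) = c • Sfun f x := by
    intro f c x
    refine tendsto_nhds_unique (htend f (c • x)) ?_
    exact ((htend f x).const_smul c).congr (fun N => (hpsum_smul (f : ℕ → ℝ) c x N).symm)
  have hSfun_bound : ∀ f (x : X), ‖Sfun f x‖ ≤ K * ‖f‖ * ‖x‖ := by
    intro f x
    refine le_of_tendsto (htend f x).norm (Filter.Eventually.of_forall (fun N => ?_))
    exact hpsum_le (f : ℕ → ℝ) ‖f‖ (norm_nonneg f) (hcoebound f) x N
  set Sop : lp (fun _ : ℕ => ℝ) ⊤ → (X →L[ℝ] X) := fun f =>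
    LinearMap.mkContinuous
      { toFun := fun x => Sfun f x
        map_add' := hSfun_add f
        map_smul' := hSfun_smul f }
      (K * ‖f‖) (fun x => hSfun_bound f x) with hSopdef
  have hSop_apply : ∀ f x, Sop f x = Sfun f x := fun f x => rfl
  have hSop_norm : ∀ f, ‖Sop f‖ ≤ K * ‖f‖ := fun f =>
    LinearMap.mkContinuous_norm_le _ (mul_nonneg hK0 (norm_nonneg f)) _
  -- linearity in f
  have hpsum_addf : ∀ (f g : ℕ → ℝ) (x : X) (N : ℕ),
      psumDef e es (fun n => f n + g n) x N = psumDef e es f x N + psumDef e es g x N := by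
    intro f g x N
    unfold psumDef
    rw [← Finset.sum_add_distrib]
    refine Finset.sum_congr rfl (fun n _ => ?_)
    rw [← add_smul]
    congr 1
    ring
  have hpsum_smulf : ∀ (f : ℕ → ℝ) (c : ℝ) (x : X) (N : ℕ),
      psumDef e es (fun n => c * f n) x N = c • psumDef e es f x N := by
    intro f c x N
    unfold psumDef
    rw [Finset.smul_sum]
    refine Finset.sum_congr rfl (fun n _ => ?_)
    rw [smul_smul]
    congr 1
    ring
  have hSop_addf : ∀ f g, Sop (f + g) = Sop f + Sop g := by
    intro f g
    ext x
    rw [ContinuousLinearMap.add_apply, hSop_apply, hSop_apply, hSop_apply]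
    refine tendsto_nhds_unique (htend (f+g) x) ?_
    refine ((htend f x).add (htend g x)).congr (fun N => ?_)
    have : psumDef e es ((f+g : lp (fun _ : ℕ => ℝ) ⊤) : ℕ → ℝ) x N = psumDef e es f x N + psumDef e es g x N := by
      rw [lp.coeFn_add]
      exact hpsum_addf (f : ℕ → ℝ) (g : ℕ → ℝ) x N
    exact this.symm
  have hSop_smulf : ∀ (c : ℝ) f, Sop (c • f) = c • Sop f := by
    intro c f
    ext x
    rw [ContinuousLinearMap.smul_apply, hSop_apply, hSop_apply]
    refine tendsto_nhds_unique (htend (c • f) x) ?_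
    refine ((htend f x).const_smul c).congr (fun N => ?_)
    have : psumDef e es ((c • f : lp (fun _ : ℕ => ℝ) ⊤) : ℕ → ℝ) x N = c • psumDef e es f x N := by
      rw [lp.coeFn_smul]
      exact hpsum_smulf (f : ℕ → ℝ) c x N
    exact this.symm
  set Tlin : lp (fun _ : ℕ => ℝ) ⊤ →ₗ[ℝ] (X →L[ℝ] X) :=
    { toFun := Sop
      map_add' := hSop_addf
      map_smul' := hSop_smulf } with hTlindef
  set T : lp (fun _ : ℕ => ℝ) ⊤ →L[ℝ] (X →L[ℝ] X) :=
    Tlin.mkContinuous K (fun f => hSop_norm f) with hTdef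
  have hTf : ∀ f, T f = Sop f := fun f => rfl
  -- evaluation at basis vectors
  have hev : ∀ f (m : ℕ), Sop f (e (2*m+1)) = f m • e m := by
    intro f m
    rw [hSop_apply]
    refine tendsto_nhds_unique (htend f (e (2*m+1))) ?_
    have hevc : (fun _ : ℕ => (f m : ℝ) • e m) =ᶠ[atTop]
        (fun N => psumDef e es (f : ℕ → ℝ) (e (2*m+1)) N) := by
      filter_upwards [eventually_ge_atTop (m+1)] with N hN
      unfold psumDef
      have hterm : ∀ n ∈ Finset.range N,
          ((f n : ℝ) * (es (2*n+1) (e (2*m+1)) - es (2*n) (e (2*m+1)))) • e n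
            = (if m = n then (f n : ℝ) • e n else 0) := by
        intro n _
        rw [hbiorth (2*n+1) (2*m+1), hbiorth (2*n) (2*m+1)]
        by_cases h : m = n
        · subst h
          rw [if_pos rfl, if_neg (by omega), if_pos rfl]
          norm_num
        · rw [if_neg (by omega), if_neg (by omega), if_neg h]
          simp
      rw [Finset.sum_congr rfl hterm,
        Finset.sum_ite_eq (Finset.range N) m (fun n => (f n : ℝ) • e n),
        if_pos (Finset.mem_range.mpr (by omega))]
    exact tendsto_const_nhds.congr' hevc
  -- lower bound
  have hlow : ∀ f, (d/D) * ‖f‖ ≤ ‖T f‖ := by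
    intro f
    rw [hTf]
    have hperm : ∀ m : ℕ, |(f : ℕ → ℝ) m| * d ≤ ‖Sop f‖ * D := by
      intro m
      have h1 : ‖Sop f (e (2*m+1))‖ ≤ ‖Sop f‖ * ‖e (2*m+1)‖ := (Sop f).le_opNorm _
      rw [hev f m, show ‖((f : ℕ → ℝ) m : ℝ) • e m‖ = ‖((f : ℕ → ℝ) m : ℝ)‖ * ‖e m‖
        from norm_smul _ _, Real.norm_eq_abs] at h1
      calc |(f : ℕ → ℝ) m| * d ≤ |(f : ℕ → ℝ) m| * ‖e m‖ :=
            mul_le_mul_of_nonneg_left (hdD m).1 (abs_nonneg _)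
        _ ≤ ‖Sop f‖ * ‖e (2*m+1)‖ := h1
        _ ≤ ‖Sop f‖ * D := mul_le_mul_of_nonneg_left (hdD _).2 (norm_nonneg _)
    have hnf : ‖f‖ ≤ (D/d) * ‖Sop f‖ := by
      apply lp.norm_le_of_forall_le (by positivity)
      intro i
      rw [Real.norm_eq_abs, div_mul_eq_mul_div, le_div_iff₀ hd]
      calc |(f : ℕ → ℝ) i| * d ≤ ‖Sop f‖ * D := hperm i
        _ = D * ‖Sop f‖ := mul_comm _ _
    calc (d/D) * ‖f‖ ≤ (d/D) * ((D/d) * ‖Sop f‖) :=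
          mul_le_mul_of_nonneg_left hnf (by positivity)
      _ = ‖Sop f‖ := by
          rw [← mul_assoc, show (d/D) * (D/d) = 1 from by field_simp, one_mul]
  refine ⟨T, ?_, d/D, by positivity, fun f => hlow f⟩
  intro f g hfg
  have h0 : T (f - g) = 0 := by rw [map_sub, hfg, sub_self]
  have h2 := hlow (f - g)
  rw [h0, norm_zero] at h2
  have hn : ‖f - g‖ ≤ 0 := by
    have hdD0 : 0 < d / D := by positivity
    nlinarith [norm_nonneg (f - g)]
  have h3 : f - g = 0 := norm_le_zero_iff.mp hn
  exact sub_eq_zero.mp h3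
end

section
/- Let (w_n) be an unconditional basic sequence in a Banach space X, and assume that there exists a bounded linear operator from X to [(w_n)], the closed linear span of (w_n), which is not compact. Then ℓ∞ embeds isomorphically into L(X). -/
set_option linter.unusedSectionVars false
set_option maxHeartbeats 1000000


open Filter Topology

open Filter Topology Submodule

namespace TW

variable {X : Type*} [NormedAddCommGroup X] [NormedSpace ℝ X]

theorem mult_sign (w : ℕ → X) (K : ℝ)
    (hK : ∀ (a ε : ℕ → ℝ), (∀ n, ε n = 1 ∨ ε n = -1) →
      ∀ F : Finset ℕ, ‖∑ n ∈ F, (ε n * a n) • w n‖ ≤ K * ‖∑ n ∈ F, a n • w n‖)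
    (F : Finset ℕ) (a g : ℕ → ℝ) (hg : ∀ n ∈ F, g n = 1 ∨ g n = -1) :
    ‖∑ n ∈ F, (g n * a n) • w n‖ ≤ K * ‖∑ n ∈ F, a n • w n‖ := by
  set ε : ℕ → ℝ := fun n => if g n = -1 then -1 else 1 with hε
  have hsigns : ∀ n, ε n = 1 ∨ ε n = -1 := by
    intro n
    by_cases h : g n = -1 <;> simp [hε, h]
  have : ∑ n ∈ F, (g n * a n) • w n = ∑ n ∈ F, (ε n * a n) • w n := by
    refine Finset.sum_congr rfl fun n hn => ?_
    rcases hg n hn with h | h <;> simp [hε, h] <;> norm_num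
  rw [this]
  exact hK a ε hsigns F

theorem mult_ineq (w : ℕ → X) (K : ℝ)
    (hK : ∀ (a ε : ℕ → ℝ), (∀ n, ε n = 1 ∨ ε n = -1) →
      ∀ F : Finset ℕ, ‖∑ n ∈ F, (ε n * a n) • w n‖ ≤ K * ‖∑ n ∈ F, a n • w n‖)
    (F : Finset ℕ) (a g : ℕ → ℝ) (hg : ∀ n ∈ F, |g n| ≤ 1) :
    ‖∑ n ∈ F, (g n * a n) • w n‖ ≤ K * ‖∑ n ∈ F, a n • w n‖ := by
  suffices H : ∀ (N : ℕ) (g : ℕ → ℝ), (∀ n ∈ F, |g n| ≤ 1) →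
      (F.filter fun n => g n ≠ 1 ∧ g n ≠ -1).card ≤ N →
      ‖∑ n ∈ F, (g n * a n) • w n‖ ≤ K * ‖∑ n ∈ F, a n • w n‖ from
    H _ g hg le_rfl
  intro N
  induction N with
  | zero =>
    intro g hg1 hcard
    have h0 : (F.filter fun n => g n ≠ 1 ∧ g n ≠ -1) = ∅ :=
      Finset.card_eq_zero.mp (Nat.le_zero.mp hcard)
    refine mult_sign w K hK F a g fun n hn => ?_
    by_contra hc
    push_neg at hc
    have : n ∈ F.filter fun n => g n ≠ 1 ∧ g n ≠ -1 := Finset.mem_filter.2 ⟨hn, hc⟩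
    simp [h0] at this
  | succ N ih =>
    intro g hg1 hcard
    by_cases hex : ∃ m ∈ F, g m ≠ 1 ∧ g m ≠ -1
    · obtain ⟨m, hmF, hm⟩ := hex
      set t : ℝ := (1 + g m) / 2 with ht
      have habs := abs_le.mp (hg1 m hmF)
      have ht0 : 0 ≤ t := by rw [ht]; linarith [habs.1]
      have ht1 : t ≤ 1 := by rw [ht]; linarith [habs.2]
      set g1 := Function.update g m 1 with hg1d
      set g2 := Function.update g m (-1) with hg2d
      have key : ∑ n ∈ F, (g n * a n) • w n
          = t • ∑ n ∈ F, (g1 n * a n) • w n + (1 - t) • ∑ n ∈ F, (g2 n * a n) • w n := by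
        rw [Finset.smul_sum, Finset.smul_sum, ← Finset.sum_add_distrib]
        refine Finset.sum_congr rfl fun n hn => ?_
        rw [smul_smul, smul_smul, ← add_smul]
        congr 1
        by_cases hnm : n = m
        · subst hnm
          simp only [hg1d, hg2d, Function.update_self, ht]
          ring
        · simp only [hg1d, hg2d, Function.update_of_ne hnm]
          ring
      have hmem : m ∈ F.filter fun n => g n ≠ 1 ∧ g n ≠ -1 := Finset.mem_filter.2 ⟨hmF, hm⟩
      have hsub : ∀ c : ℝ, c = 1 ∨ c = -1 → (F.filter fun n => Function.update g m c n ≠ 1 ∧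
          Function.update g m c n ≠ -1) ⊆ (F.filter fun n => g n ≠ 1 ∧ g n ≠ -1).erase m := by
        intro c hc n hn
        rw [Finset.mem_filter] at hn
        have hnm : n ≠ m := by
          rintro rfl
          rcases hc with rfl | rfl
          · exact hn.2.1 (by rw [Function.update_self])
          · exact hn.2.2 (by rw [Function.update_self])
        rw [Function.update_of_ne hnm] at hn
        exact Finset.mem_erase.2 ⟨hnm, Finset.mem_filter.2 ⟨hn.1, hn.2⟩⟩
      have hcard' : ∀ c : ℝ, c = 1 ∨ c = -1 → (F.filter fun n => Function.update g m c n ≠ 1 ∧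
          Function.update g m c n ≠ -1).card ≤ N := by
        intro c hc
        have h1 := Finset.card_le_card (hsub c hc)
        rw [Finset.card_erase_of_mem hmem] at h1
        omega
      have hgb : ∀ c : ℝ, |c| ≤ 1 → ∀ n ∈ F, |Function.update g m c n| ≤ 1 := by
        intro c hc n hn
        by_cases hnm : n = m
        · subst hnm; rw [Function.update_self]; exact hc
        · rw [Function.update_of_ne hnm]; exact hg1 n hn
      have ihA := ih g1 (hgb 1 (by norm_num)) (hcard' 1 (Or.inl rfl))
      have ihB := ih g2 (hgb (-1) (by norm_num)) (hcard' (-1) (Or.inr rfl))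
      rw [key]
      calc ‖t • ∑ n ∈ F, (g1 n * a n) • w n + (1 - t) • ∑ n ∈ F, (g2 n * a n) • w n‖
          ≤ ‖t • ∑ n ∈ F, (g1 n * a n) • w n‖ + ‖(1 - t) • ∑ n ∈ F, (g2 n * a n) • w n‖ :=
            norm_add_le _ _
        _ = t * ‖∑ n ∈ F, (g1 n * a n) • w n‖ + (1 - t) * ‖∑ n ∈ F, (g2 n * a n) • w n‖ := by
            rw [norm_smul, norm_smul, Real.norm_eq_abs, Real.norm_eq_abs,
              abs_of_nonneg ht0, abs_of_nonneg (by linarith : (0:ℝ) ≤ 1 - t)]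
        _ ≤ t * (K * ‖∑ n ∈ F, a n • w n‖) + (1 - t) * (K * ‖∑ n ∈ F, a n • w n‖) :=
            add_le_add (mul_le_mul_of_nonneg_left ihA ht0)
              (mul_le_mul_of_nonneg_left ihB (by linarith))
        _ = K * ‖∑ n ∈ F, a n • w n‖ := by ring
    · push_neg at hex
      refine mult_sign w K hK F a g fun n hn => ?_
      by_contra hc
      push_neg at hc
      exact hc.2 (hex n hn hc.1)

end TW


open Filter Topology Submodule

namespace TW2

variable {X : Type*} [NormedAddCommGroup X] [NormedSpace ℝ X]

theorem li_of_uncond (w : ℕ → X) (hw0 : ∀ n, w n ≠ 0) (K : ℝ)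
    (hK : ∀ (a ε : ℕ → ℝ), (∀ n, ε n = 1 ∨ ε n = -1) →
      ∀ F : Finset ℕ, ‖∑ n ∈ F, (ε n * a n) • w n‖ ≤ K * ‖∑ n ∈ F, a n • w n‖) :
    LinearIndependent ℝ w := by
  rw [linearIndependent_iff']
  intro s a hsum i hi
  set ε : ℕ → ℝ := fun n => if n = i then -1 else 1 with hε
  have hsigns : ∀ n, ε n = 1 ∨ ε n = -1 := by
    intro n; by_cases h : n = i <;> simp [hε, h]
  have h1 := hK a ε hsigns s
  rw [hsum, norm_zero, mul_zero] at h1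
  have h2 : ∑ n ∈ s, (ε n * a n) • w n = 0 := norm_le_zero_iff.mp h1
  have h3 : ∑ n ∈ s, (a n - ε n * a n) • w n = 0 := by
    simp only [sub_smul, Finset.sum_sub_distrib, hsum, h2, sub_zero]
  have h4 : ∑ n ∈ s, (a n - ε n * a n) • w n = (2 * a i) • w i := by
    rw [Finset.sum_eq_single_of_mem i hi]
    · congr 1; simp [hε]; ring
    · intro b hb hbi
      simp [hε, hbi]
  rw [h4] at h3
  rcases smul_eq_zero.mp h3 with h | h
  · linarith [h, abs_nonneg (a i)]
  · exact absurd h (hw0 i)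

end TW2


open Filter Topology Submodule ContinuousLinearMap

namespace TW3

variable {X : Type*} [NormedAddCommGroup X] [NormedSpace ℝ X] [CompleteSpace X]
variable (w : ℕ → X)

abbrev S0 : Submodule ℝ X := Submodule.span ℝ (Set.range w)

abbrev YY : Submodule ℝ X := (Submodule.span ℝ (Set.range w)).topologicalClosure

noncomputable instance : CompleteSpace ↥(YY w) :=
  (Submodule.isClosed_topologicalClosure _).completeSpace_coe

noncomputable def incl : ↥(S0 w) →L[ℝ] ↥(YY w) :=
  LinearMap.mkContinuous (Submodule.inclusion (Submodule.le_topologicalClosure _)) 1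
    (fun z => by simp [Submodule.inclusion])

@[simp] lemma coe_incl (z : ↥(S0 w)) : ((incl w z : (YY w)) : X) = (z : X) := rfl

lemma norm_incl (z : ↥(S0 w)) : ‖incl w z‖ = ‖z‖ := rfl

lemma isometry_incl : Isometry ⇑(incl w) :=
  AddMonoidHomClass.isometry_of_norm _ (norm_incl w)

lemma denseRange_incl : DenseRange ⇑(incl w) := by
  intro u
  rw [closure_subtype]
  have h1 : (Subtype.val '' Set.range ⇑(incl w)) = ((S0 w : Submodule ℝ X) : Set X) := by
    ext x
    constructor
    · rintro ⟨y, ⟨z, rfl⟩, rfl⟩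
      exact z.2
    · intro hx
      exact ⟨incl w ⟨x, hx⟩, ⟨⟨x, hx⟩, rfl⟩, rfl⟩
  rw [h1, ← Submodule.topologicalClosure_coe, SetLike.mem_coe]
  exact u.2

noncomputable def wS (n : ℕ) : ↥(S0 w) := ⟨w n, Submodule.subset_span ⟨n, rfl⟩⟩

noncomputable def wY (n : ℕ) : ↥(YY w) := incl w (wS w n)

@[simp] lemma coe_wY (n : ℕ) : ((wY w n : (YY w)) : X) = w n := rfl

variable (hli : LinearIndependent ℝ w)

noncomputable def bW : Module.Basis ℕ ℝ ↥(S0 w) := Module.Basis.span hli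

lemma bW_eq (n : ℕ) : bW w hli n = wS w n :=
  (Module.Basis.span_apply hli n)

/-- The diagonal multiplier on the span, as a linear map into the closure. -/
noncomputable def DspanL (g : ℕ → ℝ) : ↥(S0 w) →ₗ[ℝ] ↥(YY w) :=
  LinearMap.codRestrict (YY w)
    ((Finsupp.linearCombination ℝ (fun n => g n • w n)).comp (bW w hli).repr.toLinearMap)
    (by
      intro z
      rw [LinearMap.comp_apply, Finsupp.linearCombination_apply, Finsupp.sum]
      refine Submodule.sum_mem _ (fun n _ => ?_)
      exact Submodule.smul_mem _ _ (Submodule.smul_mem _ _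
        (Submodule.le_topologicalClosure _ (Submodule.subset_span ⟨n, rfl⟩))))

lemma coe_DspanL (g : ℕ → ℝ) (z : ↥(S0 w)) :
    ((DspanL w hli g z : (YY w)) : X)
      = ∑ n ∈ ((bW w hli).repr z).support, (g n * ((bW w hli).repr z) n) • w n := by
  rw [DspanL]
  simp only [LinearMap.codRestrict_apply, LinearMap.comp_apply, LinearEquiv.coe_coe,
    Finsupp.linearCombination_apply]
  rw [Finsupp.sum]
  refine Finset.sum_congr rfl fun n _ => ?_
  rw [smul_smul, mul_comm]

lemma coe_span_elt (z : ↥(S0 w)) :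
    (z : X) = ∑ n ∈ ((bW w hli).repr z).support, (((bW w hli).repr z) n) • w n := by
  conv_lhs => rw [← (bW w hli).linearCombination_repr z]
  rw [Finsupp.linearCombination_apply, Finsupp.sum]
  push_cast
  refine Finset.sum_congr rfl fun n _ => ?_
  rw [bW_eq]
  rfl

variable (K : ℝ)
  (hmult : ∀ (F : Finset ℕ) (a g : ℕ → ℝ), (∀ n ∈ F, |g n| ≤ 1) →
      ‖∑ n ∈ F, (g n * a n) • w n‖ ≤ K * ‖∑ n ∈ F, a n • w n‖)

include hmult in
lemma norm_DspanL_le {g : ℕ → ℝ} {C : ℝ} (hC : 0 ≤ C) (hg : ∀ n, |g n| ≤ C) (z : ↥(S0 w)) :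
    ‖DspanL w hli g z‖ ≤ K * C * ‖z‖ := by
  have hz : ‖z‖ = ‖∑ n ∈ ((bW w hli).repr z).support, (((bW w hli).repr z) n) • w n‖ := by
    rw [← coe_span_elt w hli z]; rfl
  have hD : ‖DspanL w hli g z‖
      = ‖∑ n ∈ ((bW w hli).repr z).support, (g n * ((bW w hli).repr z) n) • w n‖ := by
    rw [← coe_DspanL w hli g z]; rfl
  rcases eq_or_lt_of_le hC with hC0 | hC0
  · have hg0 : ∀ n, g n = 0 := fun n =>
      abs_eq_zero.mp (le_antisymm (le_trans (hg n) hC0.symm.le) (abs_nonneg _))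
    rw [hD]
    simp only [hg0, zero_mul, zero_smul, Finset.sum_const_zero, norm_zero]
    rw [← hC0, mul_zero, zero_mul]
  · have key := hmult ((bW w hli).repr z).support ((bW w hli).repr z) (fun n => g n / C)
      (fun n _ => by rw [abs_div, abs_of_pos hC0, div_le_one hC0]; exact hg n)
    rw [hD, hz]
    have : ∑ n ∈ ((bW w hli).repr z).support, (g n * ((bW w hli).repr z) n) • w n
        = C • ∑ n ∈ ((bW w hli).repr z).support, (g n / C * ((bW w hli).repr z) n) • w n := by
      rw [Finset.smul_sum]
      refine Finset.sum_congr rfl fun n _ => ?_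
      rw [smul_smul]
      congr 1
      field_simp
    rw [this, norm_smul, Real.norm_eq_abs, abs_of_pos hC0]
    calc C * ‖∑ n ∈ ((bW w hli).repr z).support, (g n / C * ((bW w hli).repr z) n) • w n‖
        ≤ C * (K * ‖∑ n ∈ ((bW w hli).repr z).support, (((bW w hli).repr z) n) • w n‖) :=
          mul_le_mul_of_nonneg_left key hC
      _ = K * C * ‖∑ n ∈ ((bW w hli).repr z).support, (((bW w hli).repr z) n) • w n‖ := by ring

/-- Bounded diagonal multiplier extended to the closed span. -/
noncomputable def Dop (g : ℕ → ℝ) (hg : ∃ C, 0 ≤ C ∧ ∀ n, |g n| ≤ C) : ↥(YY w) →L[ℝ] ↥(YY w) :=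
  ContinuousLinearMap.extend
    (LinearMap.mkContinuousOfExistsBound (DspanL w hli g)
      ⟨K * hg.choose, fun z => norm_DspanL_le w hli K hmult hg.choose_spec.1 hg.choose_spec.2 z⟩)
    (incl w)

lemma Dop_incl (g : ℕ → ℝ) (hg : ∃ C, 0 ≤ C ∧ ∀ n, |g n| ≤ C) (z : ↥(S0 w)) :
    Dop w hli K hmult g hg (incl w z) = DspanL w hli g z :=
  ContinuousLinearMap.extend_eq _ (denseRange_incl w) ((isometry_incl w).isUniformInducing) z

lemma dense_ind (p : ↥(YY w) → Prop) (hp : IsClosed {u | p u})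
    (h : ∀ z, p (incl w z)) (u : ↥(YY w)) : p u :=
  DenseRange.induction_on (denseRange_incl w) u hp h

lemma Dop_wY (g : ℕ → ℝ) (hg : ∃ C, 0 ≤ C ∧ ∀ n, |g n| ≤ C) (n : ℕ) :
    Dop w hli K hmult g hg (wY w n) = g n • wY w n := by
  rw [wY, Dop_incl w hli K hmult g hg]
  refine Subtype.ext ?_
  rw [coe_DspanL]
  have h1 : wS w n = bW w hli n := (bW_eq w hli n).symm
  rw [h1, Module.Basis.repr_self]
  rw [Finsupp.support_single_ne_zero n one_ne_zero]
  simp only [Finset.sum_singleton, Finsupp.single_eq_same, mul_one]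
  rw [← h1]
  rfl

include hli in
lemma ext_dense {G : Type*} [NormedAddCommGroup G] [NormedSpace ℝ G]
    (A B : ↥(YY w) →L[ℝ] G) (h : ∀ n, A (wY w n) = B (wY w n)) : A = B := by
  have h2 : ∀ z : ↥(S0 w), A (incl w z) = B (incl w z) := by
    have hl : (A.comp (incl w)).toLinearMap = (B.comp (incl w)).toLinearMap :=
      Module.Basis.ext (bW w hli) fun n => by
        have : incl w (bW w hli n) = wY w n := by rw [bW_eq]; rfl
        simp only [LinearMap.coe_comp, ContinuousLinearMap.coe_coe, Function.comp_apply]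
        rw [ContinuousLinearMap.comp_apply, ContinuousLinearMap.comp_apply, this]
        exact h n
    intro z
    exact LinearMap.congr_fun hl z
  ext u
  exact dense_ind w (fun u => A u = B u) (isClosed_eq A.continuous B.continuous) h2 u

lemma Dop_norm_le (g : ℕ → ℝ) (hg : ∃ C, 0 ≤ C ∧ ∀ n, |g n| ≤ C)
    {C : ℝ} (hC : 0 ≤ C) (hgC : ∀ n, |g n| ≤ C) (u : ↥(YY w)) :
    ‖Dop w hli K hmult g hg u‖ ≤ K * C * ‖u‖ := by
  refine dense_ind w (fun u => ‖Dop w hli K hmult g hg u‖ ≤ K * C * ‖u‖) ?_ ?_ u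
  · exact isClosed_le ((Dop w hli K hmult g hg).continuous.norm)
      (continuous_const.mul continuous_norm)
  · intro z
    rw [Dop_incl, norm_incl]
    exact norm_DspanL_le w hli K hmult hC hgC z

lemma Dop_congr (g g' : ℕ → ℝ) (hg : ∃ C, 0 ≤ C ∧ ∀ n, |g n| ≤ C) (h : g = g')
    (hg' : ∃ C, 0 ≤ C ∧ ∀ n, |g' n| ≤ C) :
    Dop w hli K hmult g hg = Dop w hli K hmult g' hg' := by subst h; rfl

lemma Dop_add (g1 g2 : ℕ → ℝ) (h1 : ∃ C, 0 ≤ C ∧ ∀ n, |g1 n| ≤ C)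
    (h2 : ∃ C, 0 ≤ C ∧ ∀ n, |g2 n| ≤ C) (h12 : ∃ C, 0 ≤ C ∧ ∀ n, |(g1 + g2) n| ≤ C) :
    Dop w hli K hmult (g1 + g2) h12 = Dop w hli K hmult g1 h1 + Dop w hli K hmult g2 h2 := by
  refine ext_dense w hli _ _ fun n => ?_
  rw [ContinuousLinearMap.add_apply, Dop_wY, Dop_wY, Dop_wY, Pi.add_apply, add_smul]

lemma Dop_smul (c : ℝ) (g : ℕ → ℝ) (h : ∃ C, 0 ≤ C ∧ ∀ n, |g n| ≤ C)
    (h' : ∃ C, 0 ≤ C ∧ ∀ n, |(c • g) n| ≤ C) :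
    Dop w hli K hmult (c • g) h' = c • Dop w hli K hmult g h := by
  refine ext_dense w hli _ _ fun n => ?_
  rw [ContinuousLinearMap.smul_apply, Dop_wY, Dop_wY, Pi.smul_apply, smul_smul, smul_eq_mul]

lemma Dop_comp (g1 g2 : ℕ → ℝ) (h1 : ∃ C, 0 ≤ C ∧ ∀ n, |g1 n| ≤ C)
    (h2 : ∃ C, 0 ≤ C ∧ ∀ n, |g2 n| ≤ C) (h12 : ∃ C, 0 ≤ C ∧ ∀ n, |(g1 * g2) n| ≤ C) :
    (Dop w hli K hmult g1 h1).comp (Dop w hli K hmult g2 h2)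
      = Dop w hli K hmult (g1 * g2) h12 := by
  refine ext_dense w hli _ _ fun n => ?_
  rw [ContinuousLinearMap.comp_apply, Dop_wY, Dop_wY, map_smul, Dop_wY, Pi.mul_apply,
    smul_smul, mul_comm]

lemma Dop_one (h : ∃ C, 0 ≤ C ∧ ∀ n, |(1 : ℕ → ℝ) n| ≤ C) :
    Dop w hli K hmult 1 h = ContinuousLinearMap.id ℝ ↥(YY w) := by
  refine ext_dense w hli _ _ fun n => ?_
  rw [Dop_wY, ContinuousLinearMap.id_apply, Pi.one_apply, one_smul]

lemma Dop_mem_span (g : ℕ → ℝ) (hg : ∃ C, 0 ≤ C ∧ ∀ n, |g n| ≤ C) (s : Finset ℕ)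
    (hs : ∀ n, n ∉ s → g n = 0) (u : ↥(YY w)) :
    ((Dop w hli K hmult g hg u : (YY w)) : X) ∈ span ℝ (w '' (s : Set ℕ)) := by
  refine dense_ind w (fun u => ((Dop w hli K hmult g hg u : (YY w)) : X)
      ∈ span ℝ (w '' (s : Set ℕ))) ?_ ?_ u
  · have : FiniteDimensional ℝ (span ℝ (w '' (s : Set ℕ))) :=
      FiniteDimensional.span_of_finite ℝ (s.finite_toSet.image w)
    exact IsClosed.preimage (continuous_subtype_val.comp
      (Dop w hli K hmult g hg).continuous) (Submodule.closed_of_finiteDimensional _)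
  · intro z
    rw [Dop_incl, coe_DspanL]
    refine Submodule.sum_mem _ fun n _ => ?_
    by_cases hn : n ∈ s
    · exact Submodule.smul_mem _ _ (Submodule.subset_span ⟨n, hn, rfl⟩)
    · rw [hs n hn, zero_mul, zero_smul]
      exact Submodule.zero_mem _

lemma norm_subtypeL_comp {Z : Type*} [NormedAddCommGroup Z] [NormedSpace ℝ Z]
    (A : Z →L[ℝ] ↥(YY w)) : ‖(YY w).subtypeL.comp A‖ = ‖A‖ := by
  refine le_antisymm ?_ ?_
  · refine ContinuousLinearMap.opNorm_le_bound _ (norm_nonneg A) fun x => ?_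
    rw [ContinuousLinearMap.comp_apply]
    exact le_trans (le_of_eq rfl) (A.le_opNorm x)
  · refine ContinuousLinearMap.opNorm_le_bound _ (norm_nonneg _) fun x => ?_
    exact le_trans (le_of_eq rfl) (((YY w).subtypeL.comp A).le_opNorm x)

end TW3

section Compact
variable {X : Type*} [NormedAddCommGroup X] [NormedSpace ℝ X]

theorem compact_of_fd (R : X →L[ℝ] X) (V : Submodule ℝ X) [FiniteDimensional ℝ V]
    (h : ∀ x, R x ∈ V) : IsCompactOperator ⇑R := by
  refine ⟨Subtype.val '' Metric.closedBall (0 : V) ‖R‖, ?_, ?_⟩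
  · exact ((ProperSpace.isCompact_closedBall _ _).image continuous_subtype_val)
  · refine Filter.mem_of_superset (Metric.ball_mem_nhds 0 one_pos) fun x hx => ?_
    refine ⟨⟨R x, h x⟩, ?_, rfl⟩
    rw [Metric.mem_closedBall, dist_zero_right]
    have : ‖(⟨R x, h x⟩ : V)‖ = ‖R x‖ := rfl
    rw [this]
    calc ‖R x‖ ≤ ‖R‖ * ‖x‖ := R.le_opNorm x
      _ ≤ ‖R‖ * 1 := by
          refine mul_le_mul_of_nonneg_left ?_ (norm_nonneg R)
          rw [Metric.mem_ball, dist_zero_right] at hx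
          exact le_of_lt hx
      _ = ‖R‖ := mul_one _

end Compact

namespace TW3

variable {X : Type*} [NormedAddCommGroup X] [NormedSpace ℝ X] [CompleteSpace X]
variable (w : ℕ → X) (hli : LinearIndependent ℝ w) (K : ℝ)
  (hmult : ∀ (F : Finset ℕ) (a g : ℕ → ℝ), (∀ n ∈ F, |g n| ≤ 1) →
      ‖∑ n ∈ F, (g n * a n) • w n‖ ≤ K * ‖∑ n ∈ F, a n • w n‖)

def indGE (N : ℕ) : ℕ → ℝ := fun j => if N ≤ j then 1 else 0
def indLT (N : ℕ) : ℕ → ℝ := fun j => if j < N then 1 else 0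
def indIco (n m : ℕ) : ℕ → ℝ := fun j => if n ≤ j ∧ j < m then 1 else 0

lemma bdd01 (g : ℕ → ℝ) (h : ∀ j, g j = 0 ∨ g j = 1) : ∃ C, 0 ≤ C ∧ ∀ n, |g n| ≤ C :=
  ⟨1, zero_le_one, fun n => by rcases h n with h' | h' <;> rw [h'] <;> norm_num⟩

lemma bdd_indGE (N : ℕ) : ∃ C, 0 ≤ C ∧ ∀ n, |indGE N n| ≤ C :=
  bdd01 _ (fun j => by unfold indGE; split <;> simp)

lemma bdd_indLT (N : ℕ) : ∃ C, 0 ≤ C ∧ ∀ n, |indLT N n| ≤ C :=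
  bdd01 _ (fun j => by unfold indLT; split <;> simp)

lemma bdd_indIco (n m : ℕ) : ∃ C, 0 ≤ C ∧ ∀ j, |indIco n m j| ≤ C :=
  bdd01 _ (fun j => by unfold indIco; split <;> simp)

lemma bdd_one : ∃ C, 0 ≤ C ∧ ∀ n, |(1 : ℕ → ℝ) n| ≤ C :=
  ⟨1, zero_le_one, fun n => by norm_num⟩

lemma bdd_smul (c : ℝ) (g : ℕ → ℝ) (h : ∃ C, 0 ≤ C ∧ ∀ n, |g n| ≤ C) :
    ∃ C, 0 ≤ C ∧ ∀ n, |(c • g) n| ≤ C := by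
  obtain ⟨C, hC, hgC⟩ := h
  refine ⟨|c| * C, by positivity, fun n => ?_⟩
  rw [Pi.smul_apply, smul_eq_mul, abs_mul]
  exact mul_le_mul_of_nonneg_left (hgC n) (abs_nonneg c)

lemma bdd_mul (g1 g2 : ℕ → ℝ) (h1 : ∃ C, 0 ≤ C ∧ ∀ n, |g1 n| ≤ C)
    (h2 : ∃ C, 0 ≤ C ∧ ∀ n, |g2 n| ≤ C) : ∃ C, 0 ≤ C ∧ ∀ n, |(g1 * g2) n| ≤ C := by
  obtain ⟨C1, hC1, h1⟩ := h1
  obtain ⟨C2, hC2, h2⟩ := h2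
  refine ⟨C1 * C2, by positivity, fun n => ?_⟩
  rw [Pi.mul_apply, abs_mul]
  exact mul_le_mul (h1 n) (h2 n) (abs_nonneg _) hC1

lemma abs_ind_le_one (g : ℕ → ℝ) (h : ∀ j, g j = 0 ∨ g j = 1) : ∀ n, |g n| ≤ 1 :=
  fun n => by rcases h n with h' | h' <;> rw [h'] <;> norm_num

lemma noncompact_T (T : X →L[ℝ] ↥(YY w)) (hT : ¬ IsCompactOperator ⇑T)
    (hcompact : IsCompactOperator ⇑((YY w).subtypeL.comp T)) : False := by
  apply hT
  have heq : ⇑T = Set.codRestrict ⇑((YY w).subtypeL.comp T) (YY w) (fun x => (T x).2) := by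
    funext x
    exact Subtype.ext rfl
  rw [heq]
  exact hcompact.codRestrict _ (Submodule.isClosed_topologicalClosure _)

include hli hmult in
lemma exists_delta (T : X →L[ℝ] ↥(YY w)) (hT : ¬ IsCompactOperator ⇑T) :
    ∃ δ : ℝ, 0 < δ ∧ ∀ N : ℕ,
      δ ≤ ‖(YY w).subtypeL.comp ((Dop w hli K hmult (indGE N) (bdd_indGE N)).comp T)‖ := by
  by_contra hcon
  push_neg at hcon
  apply noncompact_T w T hT
  have hmem : ((YY w).subtypeL.comp T) ∈ closure {f : X →L[ℝ] X | IsCompactOperator ⇑f} := by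
    rw [Metric.mem_closure_iff]
    intro ε hε
    obtain ⟨N, hN⟩ := hcon ε hε
    refine ⟨(YY w).subtypeL.comp ((Dop w hli K hmult (indLT N) (bdd_indLT N)).comp T), ?_, ?_⟩
    · haveI := FiniteDimensional.span_of_finite ℝ ((Finset.range N).finite_toSet.image w)
      refine compact_of_fd _ (span ℝ (w '' ((Finset.range N) : Set ℕ))) fun x => ?_
      exact Dop_mem_span w hli K hmult (indLT N) (bdd_indLT N) (Finset.range N)
        (fun n hn => by unfold indLT; rw [Finset.mem_range, not_lt] at hn; simp [Nat.not_lt.mpr hn]) (T x)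
    · rw [dist_eq_norm]
      have hsplit : (YY w).subtypeL.comp T
          - (YY w).subtypeL.comp ((Dop w hli K hmult (indLT N) (bdd_indLT N)).comp T)
          = (YY w).subtypeL.comp ((Dop w hli K hmult (indGE N) (bdd_indGE N)).comp T) := by
        have h1 : (1 : ℕ → ℝ) = indLT N + indGE N := by
          funext j
          unfold indLT indGE
          by_cases h : j < N
          · simp [h, Nat.not_le.mpr h]
          · simp [h, Nat.le_of_not_lt h]
        have h2 : ContinuousLinearMap.id ℝ ↥(YY w)
            = Dop w hli K hmult (indLT N) (bdd_indLT N)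
              + Dop w hli K hmult (indGE N) (bdd_indGE N) := by
          rw [← Dop_one w hli K hmult bdd_one,
            Dop_congr w hli K hmult 1 (indLT N + indGE N) bdd_one h1
              (h1 ▸ bdd_one)]
          exact Dop_add w hli K hmult _ _ _ _ _
        have h3 : T = (ContinuousLinearMap.id ℝ ↥(YY w)).comp T := by
          rw [ContinuousLinearMap.id_comp]
        have h4 : (YY w).subtypeL.comp T
            = (YY w).subtypeL.comp ((Dop w hli K hmult (indLT N) (bdd_indLT N)).comp T)
              + (YY w).subtypeL.comp ((Dop w hli K hmult (indGE N) (bdd_indGE N)).comp T) := by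
          conv_lhs => rw [h3]
          rw [h2, ContinuousLinearMap.add_comp, ContinuousLinearMap.comp_add]
        rw [h4, add_sub_cancel_left]
      rw [hsplit]
      exact hN
  exact isClosed_setOf_isCompactOperator.closure_subset hmem


include hli hmult in
lemma exists_next (T : X →L[ℝ] ↥(YY w)) (hK1 : 1 ≤ K) (δ : ℝ) (hδ : 0 < δ)
    (hall : ∀ N : ℕ, δ ≤ ‖(YY w).subtypeL.comp
      ((Dop w hli K hmult (indGE N) (bdd_indGE N)).comp T)‖) (n : ℕ) :
    ∃ m, n < m ∧ δ/4 ≤ ‖(YY w).subtypeL.comp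
      ((Dop w hli K hmult (indIco n m) (bdd_indIco n m)).comp T)‖ := by
  have hK0 : (0:ℝ) < K := lt_of_lt_of_le one_pos hK1
  set Q := Dop w hli K hmult (indGE n) (bdd_indGE n) with hQdef
  set A := (YY w).subtypeL.comp (Q.comp T) with hAdef
  have hx : ∃ x : X, ‖x‖ ≤ 1 ∧ δ/2 < ‖A x‖ := by
    by_contra hc
    push_neg at hc
    have hb : ∀ x : X, ‖A x‖ ≤ (δ/2) * ‖x‖ := by
      intro x
      rcases eq_or_ne x 0 with rfl | hx0
      · simp
      · have hnx : 0 < ‖x‖ := norm_pos_iff.mpr hx0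
        have h1 : ‖A (‖x‖⁻¹ • x)‖ ≤ δ/2 := by
          refine hc _ ?_
          rw [norm_smul, norm_inv, norm_norm, inv_mul_cancel₀ (ne_of_gt hnx)]
        rw [map_smul, norm_smul, norm_inv, norm_norm] at h1
        rw [inv_mul_le_iff₀ hnx] at h1
        linarith [h1]
    have hA2 : ‖A‖ ≤ δ/2 := ContinuousLinearMap.opNorm_le_bound A (by linarith) hb
    linarith [hall n]
  obtain ⟨x, hx1, hx2⟩ := hx
  set y : ↥(YY w) := T x with hydef
  set η := δ / (8 * K) with hηdef
  have hη : 0 < η := by positivity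
  obtain ⟨z, hz⟩ := (denseRange_incl w).exists_dist_lt y hη
  rw [dist_eq_norm] at hz
  set c := (bW w hli).repr z with hcdef
  set m := max (n+1) ((c.support.sup id) + 1) with hmdef
  have hm : n < m := lt_of_lt_of_le (Nat.lt_succ_self n) (le_max_left _ _)
  set P := Dop w hli K hmult (indIco n m) (bdd_indIco n m) with hPdef
  have hsupp : ∀ j ∈ c.support, indIco n m j = indGE n j := by
    intro j hj
    have hjm : j < m := lt_of_lt_of_le (Nat.lt_succ_of_le (Finset.le_sup (f := id) hj))
      (le_max_right _ _)
    unfold indIco indGE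
    by_cases hnj : n ≤ j
    · simp [hnj, hjm]
    · simp [hnj]
  have heqz : P (incl w z) = Q (incl w z) := by
    rw [hPdef, hQdef, Dop_incl, Dop_incl]
    refine Subtype.ext ?_
    rw [coe_DspanL, coe_DspanL]
    exact Finset.sum_congr rfl fun j hj => by rw [hsupp j hj]
  have hPn : ∀ u : ↥(YY w), ‖P u‖ ≤ K * ‖u‖ := fun u => by
    have := Dop_norm_le w hli K hmult (indIco n m) (bdd_indIco n m) zero_le_one
      (abs_ind_le_one _ (fun j => by unfold indIco; split <;> simp)) u
    rwa [mul_one] at this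
  have hQn : ∀ u : ↥(YY w), ‖Q u‖ ≤ K * ‖u‖ := fun u => by
    have := Dop_norm_le w hli K hmult (indGE n) (bdd_indGE n) zero_le_one
      (abs_ind_le_one _ (fun j => by unfold indGE; split <;> simp)) u
    rwa [mul_one] at this
  have hQy : δ/2 < ‖Q y‖ := hx2
  have hq1 : ‖Q y‖ ≤ ‖Q (incl w z)‖ + K * η := by
    have : Q y = Q (incl w z) + Q (y - incl w z) := by
      rw [← map_add, add_sub_cancel]
    rw [this]
    refine le_trans (norm_add_le _ _) (add_le_add_right ?_ _)
    exact le_trans (hQn _) (mul_le_mul_of_nonneg_left (le_of_lt hz) (le_of_lt hK0))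
  have hp2 : ‖P (incl w z)‖ ≤ ‖P y‖ + K * η := by
    have : P (incl w z) = P y + P (incl w z - y) := by
      rw [← map_add, add_sub_cancel]
    rw [this]
    refine le_trans (norm_add_le _ _) (add_le_add_right ?_ _)
    refine le_trans (hPn _) (mul_le_mul_of_nonneg_left ?_ (le_of_lt hK0))
    rw [norm_sub_rev]
    exact le_of_lt hz
  have hKη : K * η = δ / 8 := by
    rw [hηdef]
    field_simp
  have hPy : δ/4 ≤ ‖P y‖ := by
    have := heqz ▸ hp2
    nlinarith [hq1, hQy, hp2, heqz]
  refine ⟨m, hm, ?_⟩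
  have hval : ‖((YY w).subtypeL.comp (P.comp T)) x‖ = ‖P y‖ := rfl
  calc δ/4 ≤ ‖P y‖ := hPy
    _ = ‖((YY w).subtypeL.comp (P.comp T)) x‖ := hval.symm
    _ ≤ ‖(YY w).subtypeL.comp (P.comp T)‖ * ‖x‖ := ContinuousLinearMap.le_opNorm _ _
    _ ≤ ‖(YY w).subtypeL.comp (P.comp T)‖ * 1 :=
        mul_le_mul_of_nonneg_left hx1 (norm_nonneg _)
    _ = ‖(YY w).subtypeL.comp (P.comp T)‖ := mul_one _

end TW3

/-- **Remark 2.5 (Tong–Wilken).** If `(w n)` is an unconditional basic sequence in a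
Banach space `X` and there is a noncompact operator from `X` into the closed linear
span `[(w n)]`, then `ℓ∞` embeds isomorphically into `L(X)`. -/
theorem linfty_embeds_of_noncompact_into_unconditional_span
    {X : Type*} [NormedAddCommGroup X] [NormedSpace ℝ X] [CompleteSpace X]
    (w : ℕ → X) (hw : IsUncondBasicSeq w)
    (T : X →L[ℝ] ↥((Submodule.span ℝ (Set.range w)).topologicalClosure))
    (hT : ¬ IsCompactOperator (⇑T)) :
    ∃ J : lp (fun _ : ℕ => ℝ) ⊤ →L[ℝ] (X →L[ℝ] X),
      Function.Injective J ∧ ∃ c : ℝ, 0 < c ∧ ∀ f, c * ‖f‖ ≤ ‖J f‖ := by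
  classical
  obtain ⟨⟨hw0, -⟩, K0, hK0⟩ := hw
  set K := max K0 1 with hKdef
  have hK1 : (1:ℝ) ≤ K := le_max_right _ _
  have hK0' : (0:ℝ) < K := lt_of_lt_of_le one_pos hK1
  have hsign : ∀ (a ε : ℕ → ℝ), (∀ n, ε n = 1 ∨ ε n = -1) →
      ∀ F : Finset ℕ, ‖∑ n ∈ F, (ε n * a n) • w n‖ ≤ K * ‖∑ n ∈ F, a n • w n‖ :=
    fun a ε hε F => le_trans (hK0 a ε hε F)
      (mul_le_mul_of_nonneg_right (le_max_left _ _) (norm_nonneg _))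
  have hmult : ∀ (F : Finset ℕ) (a g : ℕ → ℝ), (∀ n ∈ F, |g n| ≤ 1) →
      ‖∑ n ∈ F, (g n * a n) • w n‖ ≤ K * ‖∑ n ∈ F, a n • w n‖ :=
    fun F a g hg => TW.mult_ineq w K hsign F a g hg
  have hli : LinearIndependent ℝ w := TW2.li_of_uncond w hw0 K0 hK0
  obtain ⟨δ, hδ, hall⟩ := TW3.exists_delta w hli K hmult T hT
  have hnext : ∀ n : ℕ, ∃ m, n < m ∧ δ/4 ≤ ‖(TW3.YY w).subtypeL.comp
      ((TW3.Dop w hli K hmult (TW3.indIco n m) (TW3.bdd_indIco n m)).comp T)‖ :=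
    TW3.exists_next w hli K hmult T hK1 δ hδ hall
  set Nf : ℕ → ℕ := fun k => Nat.rec 0 (fun _ ih => (hnext ih).choose) k with hNfdef
  have hNfs : ∀ k, Nf (k+1) = (hnext (Nf k)).choose := fun k => rfl
  have hNlt : ∀ k, Nf k < Nf (k+1) := fun k => (hnext (Nf k)).choose_spec.1
  have hNmono : StrictMono Nf := strictMono_nat_of_lt_succ hNlt
  have hNnorm : ∀ k, δ/4 ≤ ‖(TW3.YY w).subtypeL.comp
      ((TW3.Dop w hli K hmult (TW3.indIco (Nf k) (Nf (k+1)))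
        (TW3.bdd_indIco (Nf k) (Nf (k+1)))).comp T)‖ :=
    fun k => (hnext (Nf k)).choose_spec.2
  set idx : ℕ → ℕ := fun j => Nat.findGreatest (fun l => Nf l ≤ j) j with hidxdef
  have hidx : ∀ k j, Nf k ≤ j → j < Nf (k+1) → idx j = k := by
    intro k j h1 h2
    have hkj : k ≤ j := le_trans hNmono.le_apply h1
    have hk_le : k ≤ idx j := Nat.le_findGreatest hkj h1
    have hspec : Nf (idx j) ≤ j := Nat.findGreatest_spec (P := fun l => Nf l ≤ j) hkj h1
    by_contra hne
    have hlt : k < idx j := lt_of_le_of_ne hk_le (fun h => hne h.symm)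
    have : Nf (k+1) ≤ Nf (idx j) := hNmono.monotone (Nat.succ_le_of_lt hlt)
    omega
  set gf : lp (fun _ : ℕ => ℝ) ⊤ → (ℕ → ℝ) := fun f j => f (idx j) with hgfdef
  have hbdd : ∀ f : lp (fun _ : ℕ => ℝ) ⊤, ∃ C, 0 ≤ C ∧ ∀ j, |gf f j| ≤ C :=
    fun f => ⟨‖f‖, norm_nonneg f, fun j => by
      rw [← Real.norm_eq_abs]
      exact lp.norm_apply_le_norm ENNReal.top_ne_zero f (idx j)⟩
  set Jfun : lp (fun _ : ℕ => ℝ) ⊤ → (X →L[ℝ] X) := fun f =>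
    (TW3.YY w).subtypeL.comp ((TW3.Dop w hli K hmult (gf f) (hbdd f)).comp T) with hJfundef
  have hJadd : ∀ f1 f2, Jfun (f1 + f2) = Jfun f1 + Jfun f2 := by
    intro f1 f2
    have hg : gf (f1 + f2) = gf f1 + gf f2 := by
      funext j
      simp only [hgfdef, Pi.add_apply]
      exact congrFun (lp.coeFn_add f1 f2) (idx j)
    rw [hJfundef]
    simp only
    rw [TW3.Dop_congr w hli K hmult (gf (f1+f2)) (gf f1 + gf f2) (hbdd (f1+f2)) hg
        (hg ▸ hbdd (f1+f2)),
      TW3.Dop_add w hli K hmult (gf f1) (gf f2) (hbdd f1) (hbdd f2) (hg ▸ hbdd (f1+f2)),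
      ContinuousLinearMap.add_comp, ContinuousLinearMap.comp_add]
  have hJsmul : ∀ (c : ℝ) (f), Jfun (c • f) = c • Jfun f := by
    intro c f
    have hg : gf (c • f) = c • gf f := by
      funext j
      simp only [hgfdef, Pi.smul_apply]
      exact congrFun (lp.coeFn_smul c f) (idx j)
    rw [hJfundef]
    simp only
    rw [TW3.Dop_congr w hli K hmult (gf (c • f)) (c • gf f) (hbdd (c • f)) hg
        (hg ▸ hbdd (c • f)),
      TW3.Dop_smul w hli K hmult c (gf f) (hbdd f) (hg ▸ hbdd (c • f))]
    ext x
    simp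
  set Jlin : lp (fun _ : ℕ => ℝ) ⊤ →ₗ[ℝ] (X →L[ℝ] X) :=
    { toFun := Jfun
      map_add' := hJadd
      map_smul' := hJsmul } with hJlindef
  have hJbound : ∀ f, ‖Jlin f‖ ≤ K * ‖T‖ * ‖f‖ := by
    intro f
    have h0 : (0:ℝ) ≤ K * ‖T‖ * ‖f‖ := by positivity
    refine ContinuousLinearMap.opNorm_le_bound _ h0 fun x => ?_
    have h1 : ‖Jlin f x‖ = ‖TW3.Dop w hli K hmult (gf f) (hbdd f) (T x)‖ := rfl
    rw [h1]
    calc ‖TW3.Dop w hli K hmult (gf f) (hbdd f) (T x)‖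
        ≤ K * ‖f‖ * ‖T x‖ := TW3.Dop_norm_le w hli K hmult (gf f) (hbdd f)
          (norm_nonneg f) (fun j => by
            rw [← Real.norm_eq_abs]
            exact lp.norm_apply_le_norm ENNReal.top_ne_zero f (idx j)) (T x)
      _ ≤ K * ‖f‖ * (‖T‖ * ‖x‖) :=
          mul_le_mul_of_nonneg_left (T.le_opNorm x) (by positivity)
      _ = K * ‖T‖ * ‖f‖ * ‖x‖ := by ring
  set J : lp (fun _ : ℕ => ℝ) ⊤ →L[ℝ] (X →L[ℝ] X) :=
    LinearMap.mkContinuous Jlin (K * ‖T‖) hJbound with hJdef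
  have hJapp : ∀ f, J f = Jfun f := fun _ => rfl
  have hkey : ∀ (f : lp (fun _ : ℕ => ℝ) ⊤) (k : ℕ), |(f : ℕ → ℝ) k| * (δ/4) ≤ K * ‖J f‖ := by
    intro f k
    set χ := TW3.indIco (Nf k) (Nf (k+1)) with hχdef
    set hχb := TW3.bdd_indIco (Nf k) (Nf (k+1)) with hχbdef
    set Pk := TW3.Dop w hli K hmult χ hχb with hPkdef
    have hχ01 : ∀ j, χ j = 0 ∨ χ j = 1 := fun j => by
      rw [hχdef]; unfold TW3.indIco; split <;> simp
    have hgeq : (χ * gf f : ℕ → ℝ) = (f : ℕ → ℝ) k • χ := by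
      funext j
      simp only [Pi.mul_apply, Pi.smul_apply, smul_eq_mul]
      by_cases h : Nf k ≤ j ∧ j < Nf (k+1)
      · have hχ1 : χ j = 1 := by rw [hχdef]; unfold TW3.indIco; rw [if_pos h]
        have hgj : gf f j = (f : ℕ → ℝ) k := by
          simp only [hgfdef]
          rw [hidx k j h.1 h.2]
        rw [hχ1, hgj]; ring
      · have hχ0 : χ j = 0 := by rw [hχdef]; unfold TW3.indIco; rw [if_neg h]
        rw [hχ0]; ring
    have hcomp : Pk.comp (TW3.Dop w hli K hmult (gf f) (hbdd f))
        = ((f : ℕ → ℝ) k) • Pk := by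
      rw [hPkdef, TW3.Dop_comp w hli K hmult χ (gf f) hχb (hbdd f)
          (TW3.bdd_mul χ (gf f) hχb (hbdd f)),
        TW3.Dop_congr w hli K hmult (χ * gf f) ((f : ℕ → ℝ) k • χ)
          (TW3.bdd_mul χ (gf f) hχb (hbdd f)) hgeq
          (TW3.bdd_smul ((f : ℕ → ℝ) k) χ hχb),
        TW3.Dop_smul w hli K hmult ((f : ℕ → ℝ) k) χ hχb
          (TW3.bdd_smul ((f : ℕ → ℝ) k) χ hχb)]
    have hnorm1 : (TW3.YY w).subtypeL.comp
          ((Pk.comp (TW3.Dop w hli K hmult (gf f) (hbdd f))).comp T)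
        = ((f : ℕ → ℝ) k) • ((TW3.YY w).subtypeL.comp (Pk.comp T)) := by
      rw [hcomp]
      ext x
      simp
    have hge : |(f : ℕ → ℝ) k| * (δ/4) ≤ ‖(TW3.YY w).subtypeL.comp
        ((Pk.comp (TW3.Dop w hli K hmult (gf f) (hbdd f))).comp T)‖ := by
      rw [hnorm1, norm_smul ((f : ℕ → ℝ) k) (((TW3.YY w).subtypeL).comp (Pk.comp T)),
        Real.norm_eq_abs]
      exact mul_le_mul_of_nonneg_left (hNnorm k) (abs_nonneg _)
    have hle : ‖(TW3.YY w).subtypeL.comp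
        ((Pk.comp (TW3.Dop w hli K hmult (gf f) (hbdd f))).comp T)‖ ≤ K * ‖J f‖ := by
      refine ContinuousLinearMap.opNorm_le_bound _ (by positivity) fun x => ?_
      have h1 : ‖((TW3.YY w).subtypeL.comp
          ((Pk.comp (TW3.Dop w hli K hmult (gf f) (hbdd f))).comp T)) x‖
          = ‖Pk (TW3.Dop w hli K hmult (gf f) (hbdd f) (T x))‖ := rfl
      rw [h1]
      calc ‖Pk (TW3.Dop w hli K hmult (gf f) (hbdd f) (T x))‖
          ≤ K * 1 * ‖TW3.Dop w hli K hmult (gf f) (hbdd f) (T x)‖ :=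
            TW3.Dop_norm_le w hli K hmult χ hχb zero_le_one
              (TW3.abs_ind_le_one χ hχ01) _
        _ = K * ‖(J f) x‖ := by rw [mul_one]; rfl
        _ ≤ K * (‖J f‖ * ‖x‖) :=
            mul_le_mul_of_nonneg_left ((J f).le_opNorm x) (le_of_lt hK0')
        _ = K * ‖J f‖ * ‖x‖ := by ring
    exact le_trans hge hle
  have hδ4 : (0:ℝ) < δ/4 := by linarith
  have hlow : ∀ f, (δ/(4*K)) * ‖f‖ ≤ ‖J f‖ := by
    intro f
    have hub : ∀ k, ‖(f : ℕ → ℝ) k‖ ≤ (4*K/δ) * ‖J f‖ := by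
      intro k
      rw [Real.norm_eq_abs, show (4*K/δ) * ‖J f‖ = (K * ‖J f‖)/(δ/4) by
        field_simp]
      exact (le_div_iff₀ hδ4).mpr (hkey f k)
    have hsup : ‖f‖ ≤ (4*K/δ) * ‖J f‖ := by
      rw [lp.norm_eq_ciSup]
      exact ciSup_le hub
    calc (δ/(4*K)) * ‖f‖ ≤ (δ/(4*K)) * ((4*K/δ) * ‖J f‖) :=
          mul_le_mul_of_nonneg_left hsup (by positivity)
      _ = ‖J f‖ := by field_simp
  have hcpos : (0:ℝ) < δ/(4*K) := by positivity
  refine ⟨J, ?_, δ/(4*K), hcpos, hlow⟩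
  intro f1 f2 h
  have h0 : J (f1 - f2) = 0 := by rw [map_sub, h, sub_self]
  have h1 := hlow (f1 - f2)
  rw [h0, norm_zero] at h1
  have h2 : ‖f1 - f2‖ = 0 := le_antisymm (by nlinarith [norm_nonneg (f1 - f2)]) (norm_nonneg _)
  exact sub_eq_zero.mp (norm_eq_zero.mp h2)
end

section
/- Let (e_n) be a seminormalized quasisubsymmetric Schauder basis of a Banach space X with uniform quasisubsymmetry constant S > 0 (i.e., ‖Σ a_n e_{ℓ_n}‖ ≤ S‖Σ a_n e_{k_n}‖ for all strictly increasing (k_n), (ℓ_n) with k_n ≤ ℓ_n and all finitely supported (a_n)). Let (k_n) and (m_n) be strictly increasing sequences of positive integers and set z_{m_n} = e_{k_{2m_n}} − e_{k_{2m_n−1}}. Then the linear map P : X → [(z_{m_n})] defined by P(Σ_n a_n e_n) = Σ_n a_n z_{m_n} is a well-defined bounded operator with ‖P‖ ≤ 2S. Moreover, if (z_{m_n}) is weakly null and inf_n ‖z_{m_n}‖ > 0, then P is not compact. -/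
open Filter Topology

/-- **The operator `P` in the proof of Theorem 2.4.** The map
`P(∑ a n • e n) = ∑ a n • z (m n)` (where `z (m n) = e (k (2 m n + 1)) - e (k (2 m n))`,
0-based indexing) is a well-defined bounded operator into the closed span of the
`z (m n)` with `‖P‖ ≤ 2S`; moreover if `(z (m n))` is weakly null and bounded below
in norm, then `P` is not compact. -/
theorem P_bounded_and_noncompact
    {X : Type*} [NormedAddCommGroup X] [NormedSpace ℝ X] [CompleteSpace X]
    (e : ℕ → X) (hbasis : IsSchauderBasis e) (hsemi : Seminormalized e)
    (S : ℝ) (hS : 0 < S)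
    (hqss : ∀ k l : ℕ → ℕ, StrictMono k → StrictMono l → (∀ n, k n ≤ l n) →
      ∀ (a : ℕ → ℝ) (F : Finset ℕ),
        ‖∑ n ∈ F, a n • e (l n)‖ ≤ S * ‖∑ n ∈ F, a n • e (k n)‖)
    (k m : ℕ → ℕ) (hk : StrictMono k) (hm : StrictMono m)
    (z : ℕ → X) (hz : ∀ n, z n = e (k (2 * m n + 1)) - e (k (2 * m n))) :
    ∃ P : X →L[ℝ] ↥((Submodule.span ℝ (Set.range z)).topologicalClosure),
      (∀ n, (P (e n) : X) = z n) ∧ ‖P‖ ≤ 2 * S ∧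
      ((∀ f : X →L[ℝ] ℝ, Tendsto (fun n => f (z n)) atTop (𝓝 0)) →
        (∃ d : ℝ, 0 < d ∧ ∀ n, d ≤ ‖z n‖) → ¬ IsCompactOperator (⇑P)) := by
  classical
  set M0 := (Submodule.span ℝ (Set.range z)).topologicalClosure with hM0
  obtain ⟨d', D, hd', hsem⟩ := hsemi
  have hD : 0 < D := lt_of_lt_of_le hd' (le_trans (hsem 0).1 (hsem 0).2)
  set c : X → ℕ → ℝ := fun x => (hbasis x).exists.choose with hcdef
  have hc : ∀ x : X, Tendsto (fun M => ∑ n ∈ Finset.range M, c x n • e n) atTop (𝓝 x) :=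
    fun x => (hbasis x).exists.choose_spec
  have huniq : ∀ (x : X) (a : ℕ → ℝ),
      Tendsto (fun M => ∑ n ∈ Finset.range M, a n • e n) atTop (𝓝 x) → a = c x :=
    fun x a ha => (hbasis x).unique ha (hc x)
  -- key inequality
  have hl1 : StrictMono fun n => k (2 * m n + 1) :=
    hk.comp (fun a b h => by have := hm h; omega)
  have hl2 : StrictMono fun n => k (2 * m n) :=
    hk.comp (fun a b h => by have := hm h; omega)
  have hle1 : ∀ n, n ≤ k (2 * m n + 1) := fun n =>
    le_trans (by have := hm.le_apply (x := n); omega) hk.le_apply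
  have hle2 : ∀ n, n ≤ k (2 * m n) := fun n =>
    le_trans (by have := hm.le_apply (x := n); omega) hk.le_apply
  have key : ∀ (a : ℕ → ℝ) (F : Finset ℕ),
      ‖∑ n ∈ F, a n • z n‖ ≤ (2 * S) * ‖∑ n ∈ F, a n • e n‖ := by
    intro a F
    have e1 := hqss id _ strictMono_id hl1 hle1 a F
    have e2 := hqss id _ strictMono_id hl2 hle2 a F
    simp only [id_eq] at e1 e2
    have hsplit : ∑ n ∈ F, a n • z n
        = (∑ n ∈ F, a n • e (k (2 * m n + 1))) - ∑ n ∈ F, a n • e (k (2 * m n)) := by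
      rw [← Finset.sum_sub_distrib]
      exact Finset.sum_congr rfl fun n _ => by rw [hz n, smul_sub]
    rw [hsplit]
    have := add_le_add e1 e2
    refine (norm_sub_le _ _).trans ?_
    nlinarith [this]
  -- convergence of the image series
  have hzconv : ∀ x : X, ∃ y : M0,
      Tendsto (fun M => ∑ n ∈ Finset.range M, c x n • z n) atTop (𝓝 (y : X)) := by
    intro x
    have hcauchy : CauchySeq (fun M => ∑ n ∈ Finset.range M, c x n • z n) := by
      have hT : CauchySeq (fun M => ∑ n ∈ Finset.range M, c x n • e n) := (hc x).cauchySeq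
      have hkey : ∀ p q : ℕ,
          dist (∑ n ∈ Finset.range p, c x n • z n) (∑ n ∈ Finset.range q, c x n • z n)
          ≤ (2 * S) * dist (∑ n ∈ Finset.range p, c x n • e n)
              (∑ n ∈ Finset.range q, c x n • e n) := by
        intro p q
        rcases le_total q p with h | h
        · rw [dist_eq_norm, dist_eq_norm, ← Finset.sum_Ico_eq_sub _ h,
            ← Finset.sum_Ico_eq_sub _ h]
          exact key _ _
        · rw [dist_comm, dist_comm (∑ n ∈ Finset.range p, c x n • e n),
            dist_eq_norm, dist_eq_norm, ← Finset.sum_Ico_eq_sub _ h,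
            ← Finset.sum_Ico_eq_sub _ h]
          exact key _ _
      rw [Metric.cauchySeq_iff] at hT ⊢
      intro ε hε
      obtain ⟨N, hN⟩ := hT (ε / (2 * S)) (by positivity)
      refine ⟨N, fun p hp q hq => ?_⟩
      have h1 := hkey p q
      have h2 := hN p hp q hq
      have h3 : (2 * S) * dist (∑ n ∈ Finset.range p, c x n • e n)
          (∑ n ∈ Finset.range q, c x n • e n) < (2 * S) * (ε / (2 * S)) :=
        mul_lt_mul_of_pos_left h2 (by positivity)
      have h4 : (2 * S) * (ε / (2 * S)) = ε := by field_simp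
      linarith
    obtain ⟨y, hy⟩ := cauchySeq_tendsto_of_complete hcauchy
    have hmem : y ∈ M0 := by
      refine (Submodule.isClosed_topologicalClosure _).mem_of_tendsto hy
        (Filter.Eventually.of_forall fun M => ?_)
      exact Submodule.sum_mem _ fun n _ => Submodule.le_topologicalClosure _
        (Submodule.smul_mem _ _ (Submodule.subset_span ⟨n, rfl⟩))
    exact ⟨⟨y, hmem⟩, hy⟩
  set Q : X → M0 := fun x => (hzconv x).choose with hQdef
  have hQ : ∀ x : X, Tendsto (fun M => ∑ n ∈ Finset.range M, c x n • z n)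
      atTop (𝓝 ((Q x : X))) := fun x => (hzconv x).choose_spec
  -- linearity of coefficients
  have hcadd : ∀ x y : X, c (x + y) = fun n => c x n + c y n := by
    intro x y
    refine (huniq _ _ ?_).symm
    have h := (hc x).add (hc y)
    simpa [add_smul, Finset.sum_add_distrib] using h
  have hcsmul : ∀ (r : ℝ) (x : X), c (r • x) = fun n => r * c x n := by
    intro r x
    refine (huniq _ _ ?_).symm
    have h := (hc x).const_smul r
    simpa [Finset.smul_sum, smul_smul] using h
  have hQadd : ∀ x y : X, Q (x + y) = Q x + Q y := by
    intro x y
    have h1 := hQ (x + y)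
    rw [hcadd x y] at h1
    have h2 : Tendsto (fun M => ∑ n ∈ Finset.range M, (c x n + c y n) • z n)
        atTop (𝓝 ((Q x : X) + (Q y : X))) := by
      have := (hQ x).add (hQ y)
      simpa [add_smul, Finset.sum_add_distrib] using this
    exact Subtype.ext (by simpa using tendsto_nhds_unique h1 h2)
  have hQsmul : ∀ (r : ℝ) (x : X), Q (r • x) = r • Q x := by
    intro r x
    have h1 := hQ (r • x)
    rw [hcsmul r x] at h1
    have h2 : Tendsto (fun M => ∑ n ∈ Finset.range M, (r * c x n) • z n)
        atTop (𝓝 (r • (Q x : X))) := by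
      have := (hQ x).const_smul r
      simpa [Finset.smul_sum, smul_smul] using this
    exact Subtype.ext (by simpa using tendsto_nhds_unique h1 h2)
  let Pl : X →ₗ[ℝ] M0 :=
    { toFun := Q, map_add' := hQadd, map_smul' := hQsmul }
  have hbound : ∀ x, ‖Pl x‖ ≤ (2 * S) * ‖x‖ := by
    intro x
    have t1 : Tendsto (fun M => ‖∑ n ∈ Finset.range M, c x n • z n‖)
        atTop (𝓝 ‖(Q x : X)‖) := (hQ x).norm
    have t2 : Tendsto (fun M => (2 * S) * ‖∑ n ∈ Finset.range M, c x n • e n‖)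
        atTop (𝓝 ((2 * S) * ‖x‖)) := ((hc x).norm).const_mul _
    exact le_of_tendsto_of_tendsto' t1 t2 fun M => key _ _
  -- coefficients of basis vectors
  have hδ : ∀ n, c (e n) = fun j => if j = n then (1 : ℝ) else 0 := by
    intro n
    refine (huniq _ _ ?_).symm
    have hev : ∀ᶠ M in atTop,
        (fun _ => e n) M = ∑ j ∈ Finset.range M, (if j = n then (1 : ℝ) else 0) • e j := by
      filter_upwards [eventually_ge_atTop (n + 1)] with M hM
      simp only [ite_smul, one_smul, zero_smul,
        Finset.sum_ite_eq' (Finset.range M) n (fun j => e j)]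
      rw [if_pos (Finset.mem_range.mpr hM)]
    exact Tendsto.congr' hev tendsto_const_nhds
  have hPe : ∀ n, ((Pl (e n) : X)) = z n := by
    intro n
    have h1 := hQ (e n)
    rw [hδ n] at h1
    have h2 : Tendsto (fun M => ∑ j ∈ Finset.range M, (if j = n then (1 : ℝ) else 0) • z j)
        atTop (𝓝 (z n)) := by
      have hev : ∀ᶠ M in atTop,
          (fun _ => z n) M = ∑ j ∈ Finset.range M, (if j = n then (1 : ℝ) else 0) • z j := by
        filter_upwards [eventually_ge_atTop (n + 1)] with M hM
        simp only [ite_smul, one_smul, zero_smul,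
          Finset.sum_ite_eq' (Finset.range M) n (fun j => z j)]
        rw [if_pos (Finset.mem_range.mpr hM)]
      exact Tendsto.congr' hev tendsto_const_nhds
    exact (tendsto_nhds_unique h1 h2).symm ▸ rfl
  let P : X →L[ℝ] M0 := Pl.mkContinuous (2 * S) hbound
  refine ⟨P, fun n => hPe n, Pl.mkContinuous_norm_le (by positivity) hbound, ?_⟩
  -- noncompactness
  rintro hwnull ⟨d, hd, hdz⟩ hcpt
  obtain ⟨K, hK, hKmem⟩ := hcpt
  obtain ⟨r, hr, hball⟩ := Metric.mem_nhds_iff.mp hKmem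
  set ce : ℝ := r / (2 * D) with hce
  have hce0 : 0 < ce := by positivity
  have hmemK : ∀ n, P (ce • e n) ∈ K := by
    intro n
    apply hball
    rw [Metric.mem_ball, dist_zero_right, norm_smul, Real.norm_eq_abs, abs_of_pos hce0]
    have h1 : ce * ‖e n‖ ≤ ce * D := by
      have := (hsem n).2
      nlinarith
    have h2 : ce * D = r / 2 := by
      rw [hce]; field_simp
    linarith
  obtain ⟨w, -, φ, hφ, hconv⟩ := hK.isSeqCompact fun n => hmemK n
  have hcoe : Tendsto (fun j => ((P (ce • e (φ j)) : X))) atTop (𝓝 (w : X)) :=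
    (continuous_subtype_val.tendsto w).comp hconv
  have hPz : ∀ n, ((P (ce • e n) : X)) = ce • z n := by
    intro n
    rw [map_smul]
    have hPen : ((P (e n) : X)) = z n := hPe n
    simp [hPen]
  have hcoe' : Tendsto (fun j => ce • z (φ j)) atTop (𝓝 (w : X)) :=
    hcoe.congr fun j => hPz (φ j)
  have hw0 : (w : X) = 0 := by
    apply NormedSpace.eq_zero_of_forall_dual_eq_zero ℝ
    intro f
    have h1 : Tendsto (fun j => f (ce • z (φ j))) atTop (𝓝 (f (w : X))) :=
      (f.continuous.tendsto _).comp hcoe'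
    have h2 : Tendsto (fun j => f (ce • z (φ j))) atTop (𝓝 0) := by
      have h3 := (hwnull f).comp hφ.tendsto_atTop
      have h4 : Tendsto (fun j => ce * f (z (φ j))) atTop (𝓝 (ce * 0)) := h3.const_mul ce
      simpa [map_smul] using h4
    exact tendsto_nhds_unique h1 h2
  have hnorm : Tendsto (fun j => ‖ce • z (φ j)‖) atTop (𝓝 0) := by
    have := hcoe'.norm
    rw [hw0, norm_zero] at this
    exact this
  have hlb : ∀ j, ce * d ≤ ‖ce • z (φ j)‖ := by
    intro j
    rw [norm_smul, Real.norm_eq_abs, abs_of_pos hce0]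
    exact mul_le_mul_of_nonneg_left (hdz _) hce0.le
  have : ce * d ≤ 0 := le_of_tendsto_of_tendsto' tendsto_const_nhds hnorm hlb
  nlinarith
end

section
/- Let X be a Banach space with a seminormalized Schauder basis (e_n) whose biorthogonal functionals (e_n*) form a quasisubsymmetric basic sequence in X*. Suppose (k_n) is a strictly increasing sequence of positive integers such that (e*_{k_{2n}} − e*_{k_{2n−1}})_{n∈ℕ} is an unconditional basic sequence. Then the sequence of rank-one operators ((e*_{k_{2n}} − e*_{k_{2n−1}}) ⊗ e_n)_{n∈ℕ} in L(X) is equivalent to the unit vector basis of c0, i.e., there exist constants c, C > 0 such that c · max_n |a_n| ≤ ‖Σ_n a_n (e*_{k_{2n}} − e*_{k_{2n−1}}) ⊗ e_n‖ ≤ C · max_n |a_n| for all finitely supported scalar sequences (a_n), where the norm is the operator norm. -/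
open Filter Topology

lemma sign_choice {Y : Type*} [NormedAddCommGroup Y] [NormedSpace ℝ Y]
    (f : ℕ → Y) (d : ℕ → ℝ) (G : Finset ℕ) (s : ℕ → ℝ) (hs : ∀ n, |s n| ≤ 1) :
    ∀ v : Y, ∃ ε : ℕ → ℝ, (∀ n, ε n = 1 ∨ ε n = -1) ∧
      ‖v + ∑ n ∈ G, (s n * d n) • f n‖ ≤ ‖v + ∑ n ∈ G, (ε n * d n) • f n‖ := by
  induction G using Finset.induction with
  | empty => exact fun v => ⟨fun _ => 1, fun _ => Or.inl rfl, le_rfl⟩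
  | @insert m G hm ih =>
    intro v
    set w : Y := v + ∑ n ∈ G, (s n * d n) • f n with hw
    set u : Y := d m • f m with hu
    have hconv : ∀ t : ℝ, |t| ≤ 1 → ‖w + t • u‖ ≤ max ‖w + u‖ ‖w - u‖ := by
      intro t ht
      have h1 : (0:ℝ) ≤ (1 + t)/2 := by rw [abs_le] at ht; linarith [ht.1]
      have h2 : (0:ℝ) ≤ (1 - t)/2 := by rw [abs_le] at ht; linarith [ht.2]
      have hrw : w + t • u = ((1+t)/2) • (w + u) + ((1-t)/2) • (w - u) := by
        module
      rw [hrw]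
      calc ‖((1+t)/2) • (w + u) + ((1-t)/2) • (w - u)‖
          ≤ ((1+t)/2) * ‖w + u‖ + ((1-t)/2) * ‖w - u‖ := by
            refine (norm_add_le _ _).trans ?_
            rw [norm_smul, norm_smul, Real.norm_eq_abs, abs_of_nonneg h1,
              Real.norm_eq_abs, abs_of_nonneg h2]
        _ ≤ ((1+t)/2) * max ‖w + u‖ ‖w - u‖ + ((1-t)/2) * max ‖w + u‖ ‖w - u‖ := by
            gcongr
            · exact le_max_left _ _
            · exact le_max_right _ _
        _ = max ‖w + u‖ ‖w - u‖ := by ring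
    obtain ⟨σ, hσ, hσle⟩ : ∃ σ : ℝ, (σ = 1 ∨ σ = -1) ∧
        ‖w + s m • u‖ ≤ ‖w + σ • u‖ := by
      rcases le_total ‖w - u‖ ‖w + u‖ with h | h
      · exact ⟨1, Or.inl rfl, by simpa [max_eq_left h] using hconv (s m) (hs m)⟩
      · refine ⟨-1, Or.inr rfl, ?_⟩
        have := hconv (s m) (hs m)
        rw [max_eq_right h] at this
        simpa [sub_eq_add_neg] using this
    obtain ⟨ε, hε, hεle⟩ := ih (v + (σ * d m) • f m)
    refine ⟨Function.update ε m σ, ?_, ?_⟩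
    · intro n
      rcases eq_or_ne n m with rfl | hne
      · simpa using hσ
      · simpa [Function.update_of_ne hne] using hε n
    · have e1 : v + ∑ n ∈ insert m G, (s n * d n) • f n = w + s m • u := by
        rw [Finset.sum_insert hm, hw, hu, mul_smul]; abel
      have e2 : w + σ • u = (v + (σ * d m) • f m) + ∑ n ∈ G, (s n * d n) • f n := by
        rw [hw, hu, mul_smul]; abel
      have e3 : v + ∑ n ∈ insert m G, (Function.update ε m σ n * d n) • f n
          = (v + (σ * d m) • f m) + ∑ n ∈ G, (ε n * d n) • f n := by
        rw [Finset.sum_insert hm, Function.update_self]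
        rw [Finset.sum_congr rfl (fun n hn => by
          rw [Function.update_of_ne (by rintro rfl; exact hm hn)])]
        abel
      rw [e1, e3]
      exact hσle.trans (by rw [e2] at *; exact hεle)

set_option maxHeartbeats 1000000 in
/-- **The key estimate in the proof of Theorem 2.9.** If the biorthogonal functionals
`(es n)` of a seminormalized Schauder basis `(e n)` form a quasisubsymmetric basic
sequence and `(es (k (2n+1)) - es (k (2n)))ₙ` is unconditional (0-based indexing),
then the rank-one operators `(es (k (2n+1)) - es (k (2n))) ⊗ e n` are equivalent to
the unit vector basis of `c₀` in the operator norm. -/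
theorem rank_one_operators_equiv_c0_basis
    {X : Type*} [NormedAddCommGroup X] [NormedSpace ℝ X] [CompleteSpace X]
    (e : ℕ → X) (es : ℕ → X →L[ℝ] ℝ)
    (hbasis : IsSchauderBasis e) (hsemi : Seminormalized e)
    (hbiorth : ∀ n m, es n (e m) = if n = m then 1 else 0)
    (hbasic : IsBasicSeq es) (hqss : QuasiSubsymmetric es)
    (k : ℕ → ℕ) (hk : StrictMono k)
    (hu : IsUncondBasicSeq (fun n => es (k (2 * n + 1)) - es (k (2 * n)))) :
    ∃ c C : ℝ, 0 < c ∧ 0 < C ∧ ∀ (a : ℕ → ℝ) (F : Finset ℕ) (hF : F.Nonempty),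
      c * F.sup' hF (fun n => |a n|) ≤
        ‖∑ n ∈ F, a n • (es (k (2 * n + 1)) - es (k (2 * n))).smulRight (e n)‖ ∧
      ‖∑ n ∈ F, a n • (es (k (2 * n + 1)) - es (k (2 * n))).smulRight (e n)‖ ≤
        C * F.sup' hF (fun n => |a n|) := by
  classical
  obtain ⟨d, D, hd, hdD⟩ := hsemi
  have hD : 0 < D := lt_of_lt_of_le hd ((hdD 0).1.trans (hdD 0).2)
  set f : ℕ → X →L[ℝ] ℝ := fun n => es (k (2 * n + 1)) - es (k (2 * n)) with hf
  -- coefficient functionals recover the expansion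
  have hcoef : ∀ x : X,
      Tendsto (fun M => ∑ n ∈ Finset.range M, es n x • e n) atTop (𝓝 x) := by
    intro x
    obtain ⟨a, ha, -⟩ := hbasis x
    have haeq : ∀ m, es m x = a m := by
      intro m
      have h1 : Tendsto (fun M => es m (∑ n ∈ Finset.range M, a n • e n)) atTop
          (𝓝 (es m x)) := ((es m).continuous.tendsto x).comp ha
      have h2 : ∀ M, m < M → es m (∑ n ∈ Finset.range M, a n • e n) = a m := by
        intro M hM
        rw [map_sum]
        rw [Finset.sum_congr rfl (fun n _ => by
          rw [map_smul, hbiorth m n, smul_eq_mul])]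
        rw [show (fun n => a n * if m = n then 1 else 0) = fun n => if m = n then a m * 1 else 0 by
          funext n
          by_cases h : m = n <;> simp [h]]
        rw [Finset.sum_ite_eq]
        simp [Finset.mem_range.mpr hM]
      have h3 : Tendsto (fun M => es m (∑ n ∈ Finset.range M, a n • e n)) atTop (𝓝 (a m)) := by
        refine Tendsto.congr' ?_ tendsto_const_nhds
        filter_upwards [eventually_gt_atTop m] with M hM
        exact (h2 M hM).symm
      exact tendsto_nhds_unique h1 h3
    exact Tendsto.congr
      (fun M => Finset.sum_congr rfl (fun n _ => by rw [haeq n])) ha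
  -- uniformly bounded projections
  set P : ℕ → X →L[ℝ] X := fun N => ∑ n ∈ Finset.range N, (es n).smulRight (e n) with hP
  have hPapply : ∀ N x, P N x = ∑ n ∈ Finset.range N, es n x • e n := by
    intro N x
    simp [hP, ContinuousLinearMap.sum_apply]
  obtain ⟨Cb, hCb⟩ : ∃ Cb, ∀ N, ‖P N‖ ≤ Cb := by
    apply banach_steinhaus
    intro x
    obtain ⟨C, hC⟩ := (hcoef x).norm.bddAbove_range
    refine ⟨C, fun N => ?_⟩
    rw [hPapply]
    exact hC (Set.mem_range_self N)
  have hCb0 : 0 ≤ Cb := le_trans (norm_nonneg (P 0)) (hCb 0)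
  -- domination constants
  have h2n1 : StrictMono fun n => k (2 * n + 1) := fun a b h => hk (by omega)
  have h2n : StrictMono fun n => k (2 * n) := fun a b h => hk (by omega)
  obtain ⟨Cq, hCq0, hCq⟩ := hqss id (fun n => k (2 * n + 1)) strictMono_id h2n1
    (fun n => h2n1.le_apply)
  obtain ⟨Cp, hCp0, hCp⟩ := hqss id (fun n => k (2 * n)) strictMono_id h2n
    (fun n => h2n.le_apply)
  obtain ⟨-, K, hK⟩ := hu
  -- key estimate
  have key : ∀ (g : X →L[ℝ] ℝ), ‖g‖ ≤ 1 → ∀ N,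
      ‖∑ n ∈ Finset.range N, g (e n) • f n‖ ≤ (Cq + Cp) * Cb := by
    intro g hg N
    have hsplit : ∑ n ∈ Finset.range N, g (e n) • f n
        = (∑ n ∈ Finset.range N, g (e n) • es (k (2*n+1)))
          - ∑ n ∈ Finset.range N, g (e n) • es (k (2*n)) := by
      rw [← Finset.sum_sub_distrib]
      exact Finset.sum_congr rfl fun n _ => by rw [hf, smul_sub]
    have hcomp : ∑ n ∈ Finset.range N, g (e n) • es n = g.comp (P N) := by
      ext x
      simp [hP, ContinuousLinearMap.sum_apply, mul_comm]
    have hbound : ‖∑ n ∈ Finset.range N, g (e n) • es n‖ ≤ Cb := by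
      rw [hcomp]
      calc ‖g.comp (P N)‖ ≤ ‖g‖ * ‖P N‖ := g.opNorm_comp_le _
        _ ≤ 1 * Cb := by
            have := hCb N
            gcongr
        _ = Cb := one_mul _
    have hq' := hCq (fun n => g (e n)) (Finset.range N)
    have hp' := hCp (fun n => g (e n)) (Finset.range N)
    simp only [id_eq] at hq' hp'
    rw [hsplit]
    refine (norm_sub_le _ _).trans ?_
    have e1 : ‖∑ n ∈ Finset.range N, g (e n) • es (k (2*n+1))‖ ≤ Cq * Cb :=
      le_trans hq' (by gcongr)
    have e2 : ‖∑ n ∈ Finset.range N, g (e n) • es (k (2*n))‖ ≤ Cp * Cb :=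
      le_trans hp' (by gcongr)
    calc _ ≤ Cq * Cb + Cp * Cb := add_le_add e1 e2
      _ = (Cq + Cp) * Cb := by ring
  set K₁ : ℝ := max K 1 with hK₁
  have hK₁1 : (1:ℝ) ≤ K₁ := le_max_right K 1
  have hK₁0 : (0:ℝ) < K₁ := lt_of_lt_of_le one_pos hK₁1
  set Cb' : ℝ := max Cb 1 with hCb'
  have hCb'1 : (1:ℝ) ≤ Cb' := le_max_right Cb 1
  have hCbCb' : Cb ≤ Cb' := le_max_left Cb 1
  set CU : ℝ := K₁ * ((Cq + Cp) * Cb') with hCU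
  have hCU0 : 0 < CU := by
    have : 0 < Cq + Cp := by linarith
    have : 0 < (Cq + Cp) * Cb' := by nlinarith
    nlinarith
  refine ⟨d / D, CU, div_pos hd hD, hCU0, ?_⟩
  intro a F hF
  set T : X →L[ℝ] X :=
    ∑ n ∈ F, a n • (es (k (2 * n + 1)) - es (k (2 * n))).smulRight (e n) with hT
  set A : ℝ := F.sup' hF (fun n => |a n|) with hA
  have hA0 : 0 ≤ A := le_trans (abs_nonneg (a hF.choose)) (Finset.le_sup' (fun n => |a n|) hF.choose_spec)
  have hTapply : ∀ x, T x = ∑ n ∈ F, (a n * f n x) • e n := by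
    intro x
    rw [hT]
    simp [ContinuousLinearMap.sum_apply, smul_smul, hf]
  constructor
  · -- lower bound
    have hm : ∀ m ∈ F, |a m| * d ≤ ‖T‖ * D := by
      intro m hmF
      have hTe : T (e (k (2 * m + 1))) = a m • e m := by
        rw [hTapply]
        rw [Finset.sum_eq_single_of_mem m hmF ?_]
        · have h1 : f m (e (k (2 * m + 1))) = 1 := by
            rw [hf]
            simp only [ContinuousLinearMap.sub_apply]
            rw [hbiorth, hbiorth, if_pos rfl,
              if_neg (fun h => by have := hk.injective h; omega)]
            ring
          rw [h1, mul_one]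
        · intro n hn hne
          have h1 : f n (e (k (2 * m + 1))) = 0 := by
            rw [hf]
            simp only [ContinuousLinearMap.sub_apply]
            rw [hbiorth, hbiorth,
              if_neg (fun h => hne (by have := hk.injective h; omega)),
              if_neg (fun h => by have := hk.injective h; omega)]
            ring
          rw [h1, mul_zero, zero_smul]
      calc |a m| * d ≤ |a m| * ‖e m‖ := by
            have := (hdD m).1
            gcongr
        _ = ‖a m • e m‖ := by rw [norm_smul, Real.norm_eq_abs]
        _ = ‖T (e (k (2 * m + 1)))‖ := by rw [hTe]
        _ ≤ ‖T‖ * ‖e (k (2 * m + 1))‖ := T.le_opNorm _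
        _ ≤ ‖T‖ * D := by
            have := (hdD (k (2 * m + 1))).2
            gcongr
    have hsup : A ≤ ‖T‖ * D / d := by
      refine Finset.sup'_le hF _ (fun m hmF => ?_)
      rw [le_div_iff₀ hd]
      exact hm m hmF
    have ht := hsup
    rw [le_div_iff₀ hd] at ht
    rw [div_mul_eq_mul_div, div_le_iff₀ hD]
    linarith [ht, mul_comm A d]
  · -- upper bound
    by_cases hA' : A = 0
    · have hT0 : T = 0 := by
        rw [hT]
        refine Finset.sum_eq_zero (fun n hn => ?_)
        have h0 : a n = 0 := by
          have h1 : |a n| ≤ A := by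
            rw [hA]; exact Finset.le_sup' (fun n => |a n|) hn
          rw [hA'] at h1
          exact abs_eq_zero.mp (le_antisymm h1 (abs_nonneg _))
        rw [h0, zero_smul]
      rw [hT0, hA']
      simp
    · have hApos : 0 < A := lt_of_le_of_ne hA0 (Ne.symm hA')
      obtain ⟨N, hFN⟩ : ∃ N, F ⊆ Finset.range N :=
        ⟨F.max' hF + 1, fun n hn => Finset.mem_range.mpr
          (Nat.lt_succ_of_le (Finset.le_max' F n hn))⟩
      have hmain : ∀ x : X, ‖T x‖ ≤ (CU * A) * ‖x‖ := by
        intro x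
        by_cases hx : T x = 0
        · rw [hx, norm_zero]
          positivity
        · obtain ⟨g, hg1, hg2⟩ := exists_dual_vector ℝ (T x) (norm_ne_zero_iff.mpr hx)
          have hgT : ‖T x‖ = g (T x) := by exact_mod_cast hg2.symm
          set Φ : X →L[ℝ] ℝ := ∑ n ∈ F, (a n * g (e n)) • f n with hΦ
          have hΦx : g (T x) = Φ x := by
            rw [hTapply, map_sum, hΦ]
            simp only [ContinuousLinearMap.sum_apply, ContinuousLinearMap.smul_apply,
              map_smul, smul_eq_mul]
            exact Finset.sum_congr rfl (fun n _ => by ring)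
          have hΦnorm : ‖Φ‖ ≤ CU * A := by
            set s : ℕ → ℝ := fun n => (if n ∈ F then a n else 0) / A with hs
            have hAne : A ≠ 0 := ne_of_gt hApos
            have hs1 : ∀ n, |s n| ≤ 1 := by
              intro n
              have : |s n| = |if n ∈ F then a n else 0| / A := by
                rw [hs, abs_div, abs_of_pos hApos]
              rw [this, div_le_one hApos]
              by_cases h : n ∈ F
              · rw [if_pos h, hA]
                exact Finset.le_sup' (fun n => |a n|) h
              · rw [if_neg h, abs_zero]; exact hA0
            have hrw : Φ = ∑ n ∈ Finset.range N, (s n * (A * g (e n))) • f n := by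
              rw [hΦ, ← Finset.sum_subset hFN (fun n _ hn => by
                simp only [hs]
                rw [if_neg hn, zero_div, zero_mul, zero_smul])]
              refine Finset.sum_congr rfl (fun n hn => ?_)
              simp only [hs]
              rw [if_pos hn]
              congr 1
              field_simp
            obtain ⟨ε, hε, hεle⟩ := sign_choice f (fun n => A * g (e n))
              (Finset.range N) s hs1 0
            rw [zero_add, zero_add] at hεle
            have huncond := hK (fun n => A * g (e n)) ε hε (Finset.range N)
            have hAsmul : ∑ n ∈ Finset.range N, (A * g (e n)) • f n
                = A • ∑ n ∈ Finset.range N, g (e n) • f n := by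
              rw [Finset.smul_sum]
              exact Finset.sum_congr rfl (fun n _ => (mul_smul _ _ _))
            have hnorm2 : ‖∑ n ∈ Finset.range N, (A * g (e n)) • f n‖
                ≤ A * ((Cq + Cp) * Cb) := by
              rw [hAsmul]
              rw [norm_smul A (∑ n ∈ Finset.range N, g (e n) • f n)]
              rw [Real.norm_eq_abs, abs_of_pos hApos]
              have := key g (le_of_eq hg1) N
              gcongr
            calc ‖Φ‖ = ‖∑ n ∈ Finset.range N, (s n * (A * g (e n))) • f n‖ := by rw [hrw]
              _ ≤ ‖∑ n ∈ Finset.range N, (ε n * (A * g (e n))) • f n‖ := hεle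
              _ ≤ K * ‖∑ n ∈ Finset.range N, (A * g (e n)) • f n‖ := huncond
              _ ≤ K₁ * ‖∑ n ∈ Finset.range N, (A * g (e n)) • f n‖ := by
                  exact mul_le_mul_of_nonneg_right (le_max_left K 1)
                    (norm_nonneg (∑ n ∈ Finset.range N, (A * g (e n)) • f n))
              _ ≤ K₁ * (A * ((Cq + Cp) * Cb)) := by
                  have := hnorm2
                  gcongr
              _ = K₁ * ((Cq + Cp) * Cb) * A := by ring
              _ ≤ K₁ * ((Cq + Cp) * Cb') * A := by
                  have h1 : (0:ℝ) ≤ Cq + Cp := by linarith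
                  exact mul_le_mul_of_nonneg_right (mul_le_mul_of_nonneg_left
                    (mul_le_mul_of_nonneg_left hCbCb' h1) hK₁0.le) hA0
              _ = CU * A := by rw [hCU]
          calc ‖T x‖ = Φ x := by rw [hgT, hΦx]
            _ ≤ ‖Φ‖ * ‖x‖ := by
                have := Φ.le_opNorm x
                rw [Real.norm_eq_abs] at this
                exact (le_abs_self _).trans this
            _ ≤ (CU * A) * ‖x‖ := by gcongr
      exact T.opNorm_le_bound (by positivity) hmain
end
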